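/- arXiv:1605.05063 — 9 statements merged into one kernel-verified Lean document; each statement's English description precedes it below -/
import Mathlib

section
/- Let L > 0, f ∈ ℝ, and let P : ℝ → ℂ be a measurable function with P(t + L) = P(t) for all t ∈ ℝ and with ∫_0^L |P(t)|² dt < ∞. Define y(t) = e^{f t} P(t). If T₁ < T₂ and ∫_{T₁−L}^{T₂−L} |y(t)|² dt ≠ 0, then f = (1/L) · ln( ‖y‖_{L²(T₁,T₂)} / ‖y‖_{L²(T₁−L,T₂−L)} ). -/
/-! The factor `e^{ft}` turns `L`-periodicity of `P` into `|y(t + L)|² = e^{2fL} |y(t)|²`, so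
shifting the window by `L` multiplies the energy by exactly `e^{2fL}`; the logarithm of the
ratio of the two root energies is therefore `fL`. -/

open MeasureTheory

lemma norm_exp_ofReal_mul_mul_sq (f t : ℝ) (z : ℂ) :
    ‖Complex.exp (f * t) * z‖ ^ 2 = Real.exp (2 * f * t) * ‖z‖ ^ 2 := by
  rw [norm_mul, ← Complex.ofReal_mul, Complex.norm_exp_ofReal, mul_pow, ← Real.exp_nat_mul]
  ring_nf

lemma intervalIntegral.integral_eq_smul_integral_sub_of_add_eq_smul {E : Type*}
    [NormedAddCommGroup E] [NormedSpace ℝ E] {g : ℝ → E} {L c : ℝ}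
    (hg : ∀ t, g (t + L) = c • g t) (a b : ℝ) :
    ∫ t in a..b, g t = c • ∫ t in (a - L)..(b - L), g t := by
  simp only [← intervalIntegral.integral_smul, ← hg, intervalIntegral.integral_comp_add_right,
    sub_add_cancel]

lemma Real.log_sqrt_exp_two_mul_mul_div_sqrt (x : ℝ) {I : ℝ} (hI : 0 < I) :
    Real.log (√(Real.exp (2 * x) * I) / √I) = x := by
  rw [Real.sqrt_mul (Real.exp_nonneg _), ← Real.exp_half, mul_div_cancel_right₀ _ (by positivity),
    Real.log_exp]
  ring

theorem exponent_recovery_general (L : ℝ) (hL : 0 < L) (f : ℝ) (P : ℝ → ℂ)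
    (hPper : ∀ t : ℝ, P (t + L) = P t)
    (y : ℝ → ℂ) (hy : ∀ t : ℝ, y t = Complex.exp ((f : ℂ) * (t : ℂ)) * P t)
    (T₁ T₂ : ℝ) (h12 : T₁ < T₂)
    (hne : (∫ t in (T₁ - L)..(T₂ - L), ‖y t‖ ^ 2) ≠ 0) :
    f = (1 / L) * Real.log (Real.sqrt (∫ t in T₁..T₂, ‖y t‖ ^ 2) /
          Real.sqrt (∫ t in (T₁ - L)..(T₂ - L), ‖y t‖ ^ 2)) := by
  have hnorm (t : ℝ) : ‖y t‖ ^ 2 = Real.exp (2 * f * t) * ‖P t‖ ^ 2 := by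
    rw [hy, norm_exp_ofReal_mul_mul_sq]
  have hshift (t : ℝ) : ‖y (t + L)‖ ^ 2 = Real.exp (2 * (f * L)) • ‖y t‖ ^ 2 := by
    rw [hnorm, hnorm, hPper, smul_eq_mul, ← mul_assoc, ← Real.exp_add]
    ring_nf
  have hpos : 0 < ∫ t in (T₁ - L)..(T₂ - L), ‖y t‖ ^ 2 :=
    (intervalIntegral.integral_nonneg (by linarith) fun t _ => by positivity).lt_of_ne' hne
  rw [intervalIntegral.integral_eq_smul_integral_sub_of_add_eq_smul hshift, smul_eq_mul,
    Real.log_sqrt_exp_two_mul_mul_div_sqrt _ hpos]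
  field_simp

/-- Exact recovery formula for the exponent `f` from two shifted windows of the output
(equation (2.7) of Theorem 2.1 of the paper). -/
theorem exponent_recovery (L : ℝ) (hL : 0 < L) (f : ℝ) (P : ℝ → ℂ)
    (hPmeas : Measurable P) (hPper : ∀ t : ℝ, P (t + L) = P t)
    (hPint : IntervalIntegrable (fun t => ‖P t‖ ^ 2) volume 0 L)
    (y : ℝ → ℂ) (hy : ∀ t : ℝ, y t = Complex.exp ((f : ℂ) * (t : ℂ)) * P t)
    (T₁ T₂ : ℝ) (h12 : T₁ < T₂)
    (hne : (∫ t in (T₁ - L)..(T₂ - L), ‖y t‖ ^ 2) ≠ 0) :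
    f = (1 / L) * Real.log (Real.sqrt (∫ t in T₁..T₂, ‖y t‖ ^ 2) /
          Real.sqrt (∫ t in (T₁ - L)..(T₂ - L), ‖y t‖ ^ 2)) :=
  exponent_recovery_general L hL f P hPper y hy T₁ T₂ h12 hne
end

section
/- Let L > 0, f ∈ ℝ, M ≥ 0, and T₁ < T₂. Let y_e, d : ℝ → ℂ be measurable with |d(t)| ≤ M for all t, with ‖y_e‖_{L²(T₁,T₂)} = e^{Lf} ‖y_e‖_{L²(T₁−L,T₂−L)} and 0 < ‖y_e‖_{L²(T₁−L,T₂−L)} < ∞. Set y = y_e + d and ε = M√(T₂−T₁) / ‖y_e‖_{L²(T₁−L,T₂−L)}. If ε < 1, then (e^{Lf} − ε)/(1 + ε) ≤ ‖y‖_{L²(T₁,T₂)} / ‖y‖_{L²(T₁−L,T₂−L)} ≤ (e^{Lf} + ε)/(1 − ε), and in particular ‖y‖_{L²(T₁−L,T₂−L)} > 0. -/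
open MeasureTheory Set

/-! On each window, Minkowski's inequality in `L²` shows that the norms of `y = yₑ + d` and of `yₑ`
differ by at most `‖d‖_{L²} ≤ M √(T₂ - T₁) = ε ‖yₑ‖_{L²(T₁-L,T₂-L)}`. The shift relation then pins
the numerator to `(e^{Lf} ± ε) ‖yₑ‖` and the denominator to `(1 ± ε) ‖yₑ‖`, the latter positive
because `ε < 1`. -/

section

variable {α E : Type*} [MeasurableSpace α] {μ : Measure α} [NormedAddCommGroup E]

theorem MeasureTheory.MemLp.sqrt_integral_norm_sq_eq {g : α → E} (hg : MemLp g 2 μ) :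
    √(∫ x, ‖g x‖ ^ 2 ∂μ) = (eLpNorm g 2 μ).toReal := by
  rw [hg.eLpNorm_eq_integral_rpow_norm two_ne_zero ENNReal.ofNat_ne_top,
    ENNReal.toReal_ofReal (by positivity), Real.sqrt_eq_rpow]
  norm_num

theorem abs_sqrt_integral_norm_sq_add_sub_le {g h : α → E} (hg : MemLp g 2 μ)
    (hh : MemLp h 2 μ) :
    |√(∫ x, ‖g x + h x‖ ^ 2 ∂μ) - √(∫ x, ‖g x‖ ^ 2 ∂μ)| ≤ √(∫ x, ‖h x‖ ^ 2 ∂μ) := by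
  have := abs_norm_sub_norm_le ((hg.add hh).toLp (g + h)) (hg.toLp g)
  rwa [Lp.norm_toLp _ (hg.add hh), Lp.norm_toLp g hg, MemLp.toLp_add hg hh, add_sub_cancel_left,
    Lp.norm_toLp, ← hg.sqrt_integral_norm_sq_eq, ← hh.sqrt_integral_norm_sq_eq,
    ← (hg.add hh).sqrt_integral_norm_sq_eq] at this

theorem sqrt_integral_norm_sq_le_of_norm_le [IsFiniteMeasure μ] {h : α → E} {M : ℝ}
    (hM₀ : 0 ≤ M) (hM : ∀ᵐ x ∂μ, ‖h x‖ ≤ M) :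
    √(∫ x, ‖h x‖ ^ 2 ∂μ) ≤ M * √(μ.real univ) := by
  have hsq : ∫ x, ‖h x‖ ^ 2 ∂μ ≤ ∫ _, M ^ 2 ∂μ :=
    integral_mono_of_nonneg (ae_of_all _ fun _ => by positivity) (integrable_const _)
      (hM.mono fun x hx => pow_le_pow_left₀ (norm_nonneg _) hx 2)
  calc √(∫ x, ‖h x‖ ^ 2 ∂μ) ≤ √(μ.real univ * M ^ 2) := by
        rw [← smul_eq_mul, ← integral_const]; exact Real.sqrt_le_sqrt hsq
    _ = M * √(μ.real univ) := by
        rw [Real.sqrt_mul measureReal_nonneg, Real.sqrt_sq hM₀, mul_comm]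

end

theorem abs_sqrt_intervalIntegral_norm_sq_add_sub_le {E : Type*} [NormedAddCommGroup E]
    {g h : ℝ → E} {a b M : ℝ} (hab : a ≤ b) (hg : AEStronglyMeasurable g)
    (hg₂ : IntervalIntegrable (fun t => ‖g t‖ ^ 2) volume a b) (hh : AEStronglyMeasurable h)
    (hM : ∀ t, ‖h t‖ ≤ M) :
    |√(∫ t in a..b, ‖g t + h t‖ ^ 2) - √(∫ t in a..b, ‖g t‖ ^ 2)| ≤ M * √(b - a) := by
  have hM₀ : 0 ≤ M := (norm_nonneg _).trans (hM 0)
  simp only [intervalIntegral.integral_of_le hab]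
  have : IsFiniteMeasure (volume.restrict (Ioc a b)) := ⟨by simp⟩
  calc _ ≤ √(∫ t in Ioc a b, ‖h t‖ ^ 2) := abs_sqrt_integral_norm_sq_add_sub_le
        ((memLp_two_iff_integrable_sq_norm hg.restrict).2 hg₂.1)
        (.of_bound hh.restrict M (ae_of_all _ hM))
    _ ≤ M * √(b - a) := by
        simpa [hab] using sqrt_integral_norm_sq_le_of_norm_le
          (μ := volume.restrict (Ioc a b)) hM₀ (ae_of_all _ hM)

theorem ratio_bounds_of_abs_sub_le {E A B₁ B₀ ε : ℝ} (hA : 0 < A) (hB₁ : 0 ≤ B₁) (hε : ε < 1)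
    (h₁ : |B₁ - E * A| ≤ ε * A) (h₀ : |B₀ - A| ≤ ε * A) :
    (E - ε) / (1 + ε) ≤ B₁ / B₀ ∧ B₁ / B₀ ≤ (E + ε) / (1 - ε) ∧ 0 < B₀ := by
  obtain ⟨h₁l, h₁u⟩ := abs_sub_le_iff.1 h₁
  obtain ⟨h₀l, h₀u⟩ := abs_sub_le_iff.1 h₀
  have hε₀ : 0 ≤ ε := nonneg_of_mul_nonneg_left ((abs_nonneg _).trans h₀) hA
  have hB₀ : (1 - ε) * A ≤ B₀ := by linarith
  have hB₀pos : 0 < B₀ := lt_of_lt_of_le (by nlinarith) hB₀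
  refine ⟨?_, ?_, hB₀pos⟩
  · rcases le_or_gt (E - ε) 0 with hE | hE
    · exact (div_nonpos_of_nonpos_of_nonneg hE (by linarith)).trans (by positivity)
    · rw [← mul_div_mul_right (E - ε) (1 + ε) hA.ne']
      exact div_le_div₀ hB₁ (by linarith) hB₀pos (by linarith)
  · rw [← mul_div_mul_right (E + ε) (1 - ε) hA.ne']
    exact div_le_div₀ (by linarith) (by linarith) (by nlinarith) hB₀

theorem perturbed_ratio_bounds_general (L : ℝ) (f M : ℝ)
    (T₁ T₂ : ℝ) (h12 : T₁ < T₂)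
    (ye d : ℝ → ℂ) (hyemeas : Measurable ye) (hdmeas : Measurable d)
    (hdM : ∀ t : ℝ, ‖d t‖ ≤ M)
    (hyefin : IntervalIntegrable (fun t => ‖ye t‖ ^ 2) volume (T₁ - L) (T₂ - L))
    (hyepos : 0 < Real.sqrt (∫ t in (T₁ - L)..(T₂ - L), ‖ye t‖ ^ 2))
    (hshift : Real.sqrt (∫ t in T₁..T₂, ‖ye t‖ ^ 2) =
      Real.exp (L * f) * Real.sqrt (∫ t in (T₁ - L)..(T₂ - L), ‖ye t‖ ^ 2))
    (y : ℝ → ℂ) (hy : ∀ t : ℝ, y t = ye t + d t)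
    (ε : ℝ)
    (hε : ε = M * Real.sqrt (T₂ - T₁) / Real.sqrt (∫ t in (T₁ - L)..(T₂ - L), ‖ye t‖ ^ 2))
    (hε1 : ε < 1) :
    (Real.exp (L * f) - ε) / (1 + ε) ≤
        Real.sqrt (∫ t in T₁..T₂, ‖y t‖ ^ 2) /
          Real.sqrt (∫ t in (T₁ - L)..(T₂ - L), ‖y t‖ ^ 2) ∧
    Real.sqrt (∫ t in T₁..T₂, ‖y t‖ ^ 2) /
          Real.sqrt (∫ t in (T₁ - L)..(T₂ - L), ‖y t‖ ^ 2) ≤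
        (Real.exp (L * f) + ε) / (1 - ε) ∧
    0 < Real.sqrt (∫ t in (T₁ - L)..(T₂ - L), ‖y t‖ ^ 2) := by
  obtain rfl : y = fun t => ye t + d t := funext hy
  -- A non-integrable function would have junk integral `0`, contradicting `hshift`.
  have hye_upper : IntervalIntegrable (fun t => ‖ye t‖ ^ 2) volume T₁ T₂ :=
    intervalIntegral.intervalIntegrable_of_integral_ne_zero
      (Real.sqrt_pos.1 (hshift ▸ mul_pos (Real.exp_pos _) hyepos)).ne'
  have hupper := abs_sqrt_intervalIntegral_norm_sq_add_sub_le h12.le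
    hyemeas.aestronglyMeasurable hye_upper hdmeas.aestronglyMeasurable hdM
  have hlower := abs_sqrt_intervalIntegral_norm_sq_add_sub_le (by linarith)
    hyemeas.aestronglyMeasurable hyefin hdmeas.aestronglyMeasurable hdM
  have hδ : M * √(T₂ - T₁) = ε * √(∫ t in (T₁ - L)..(T₂ - L), ‖ye t‖ ^ 2) := by
    rw [hε, div_mul_cancel₀ _ hyepos.ne']
  rw [hshift, hδ] at hupper
  rw [sub_sub_sub_cancel_right, hδ] at hlower
  exact ratio_bounds_of_abs_sub_le hyepos (Real.sqrt_nonneg _) hε1 hupper hlower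

/-- Two-sided perturbation bound on the ratio of windowed norms of the corrupted output
(equations (2.32)–(2.35) of the paper). -/
theorem perturbed_ratio_bounds (L : ℝ) (hL : 0 < L) (f M : ℝ) (hM : 0 ≤ M)
    (T₁ T₂ : ℝ) (h12 : T₁ < T₂)
    (ye d : ℝ → ℂ) (hyemeas : Measurable ye) (hdmeas : Measurable d)
    (hdM : ∀ t : ℝ, ‖d t‖ ≤ M)
    (hyefin : IntervalIntegrable (fun t => ‖ye t‖ ^ 2) volume (T₁ - L) (T₂ - L))
    (hyepos : 0 < Real.sqrt (∫ t in (T₁ - L)..(T₂ - L), ‖ye t‖ ^ 2))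
    (hshift : Real.sqrt (∫ t in T₁..T₂, ‖ye t‖ ^ 2) =
      Real.exp (L * f) * Real.sqrt (∫ t in (T₁ - L)..(T₂ - L), ‖ye t‖ ^ 2))
    (y : ℝ → ℂ) (hy : ∀ t : ℝ, y t = ye t + d t)
    (ε : ℝ)
    (hε : ε = M * Real.sqrt (T₂ - T₁) / Real.sqrt (∫ t in (T₁ - L)..(T₂ - L), ‖ye t‖ ^ 2))
    (hε1 : ε < 1) :
    (Real.exp (L * f) - ε) / (1 + ε) ≤
        Real.sqrt (∫ t in T₁..T₂, ‖y t‖ ^ 2) /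
          Real.sqrt (∫ t in (T₁ - L)..(T₂ - L), ‖y t‖ ^ 2) ∧
    Real.sqrt (∫ t in T₁..T₂, ‖y t‖ ^ 2) /
          Real.sqrt (∫ t in (T₁ - L)..(T₂ - L), ‖y t‖ ^ 2) ≤
        (Real.exp (L * f) + ε) / (1 - ε) ∧
    0 < Real.sqrt (∫ t in (T₁ - L)..(T₂ - L), ‖y t‖ ^ 2) :=
  perturbed_ratio_bounds_general L f M T₁ T₂ h12 ye d hyemeas hdmeas hdM hyefin hyepos hshift y hy ε
    hε hε1
end

section
/- Let L > 0, c > L, f > 0, M ≥ 0. Let P : ℝ → ℂ be measurable with P(t+L) = P(t) for all t, ∫_0^L |P(t)|² dt ∈ (0, ∞), and set y_e(t) = e^{f t} P(t). Let d : ℝ → ℂ be measurable with |d(t)| ≤ M for all t, and y = y_e + d. Then ‖y‖_{L²(T, T+c)} / ‖y‖_{L²(T−L, T+c−L)} → e^{Lf} as T → +∞. -/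
open MeasureTheory Filter Topology Asymptotics

/-!
With `G T = ∫_T^{T+c} |y_e|² = ∫_T^{T+c} e^{2ft} |P t|²`, periodicity of `|P|` gives the exact
relation `G T = e^{2fL} G (T - L)`, and since the window contains a full period,
`G T ≥ e^{2fT} ∫_0^L |P|² → ∞`. Pointwise `||y|² - |y_e|²| ≤ ε |y_e|² + (1 + ε⁻¹) M²`, so the
windowed energy `Y` of `y` satisfies `|Y - G| ≤ ε G + O(1)` for every `ε > 0`, i.e. `Y ~ G`.
Hence `Y T / Y (T - L) ~ G T / G (T - L) = e^{2fL}`, and taking square roots gives `e^{Lf}`.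
-/

theorem abs_norm_add_sq_sub_norm_sq_le {E : Type*} [SeminormedAddCommGroup E] (a b : E)
    {ε : ℝ} (hε : 0 < ε) :
    |‖a + b‖ ^ 2 - ‖a‖ ^ 2| ≤ ε * ‖a‖ ^ 2 + (1 + ε⁻¹) * ‖b‖ ^ 2 := by
  have hdiff : |‖a + b‖ - ‖a‖| ≤ ‖b‖ := by
    simpa using abs_norm_sub_norm_le (a + b) a
  have hsum : ‖a + b‖ + ‖a‖ ≤ 2 * ‖a‖ + ‖b‖ := by linarith [norm_add_le a b]
  have hamgm : 2 * ‖a‖ * ‖b‖ ≤ ε * ‖a‖ ^ 2 + ε⁻¹ * ‖b‖ ^ 2 := by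
    have hsq : ε * ‖a‖ ^ 2 + ε⁻¹ * ‖b‖ ^ 2 - 2 * ‖a‖ * ‖b‖ = ε⁻¹ * (ε * ‖a‖ - ‖b‖) ^ 2 := by
      field_simp
      ring
    nlinarith [hsq, show 0 ≤ ε⁻¹ * (ε * ‖a‖ - ‖b‖) ^ 2 by positivity]
  calc |‖a + b‖ ^ 2 - ‖a‖ ^ 2| = |‖a + b‖ - ‖a‖| * (‖a + b‖ + ‖a‖) := by
        rw [← abs_of_nonneg (by positivity : 0 ≤ ‖a + b‖ + ‖a‖), ← abs_mul]
        ring_nf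
    _ ≤ ‖b‖ * (2 * ‖a‖ + ‖b‖) := by gcongr
    _ ≤ ε * ‖a‖ ^ 2 + (1 + ε⁻¹) * ‖b‖ ^ 2 := by nlinarith

theorem IntervalIntegrable.norm_add_sq_of_bounded {E : Type*} [NormedAddCommGroup E]
    {u v : ℝ → E} {a b M : ℝ} (hu : AEStronglyMeasurable u) (hv : AEStronglyMeasurable v)
    (hu2 : IntervalIntegrable (fun t => ‖u t‖ ^ 2) volume a b) (hvM : ∀ t, ‖v t‖ ≤ M) :
    IntervalIntegrable (fun t => ‖u t + v t‖ ^ 2) volume a b := by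
  rw [intervalIntegrable_iff] at hu2 ⊢
  have : IsFiniteMeasure (volume.restrict (Set.uIoc a b)) :=
    isFiniteMeasure_restrict.2 measure_Ioc_lt_top.ne
  have hu' : MemLp u 2 (volume.restrict (Set.uIoc a b)) :=
    (memLp_two_iff_integrable_sq_norm hu.restrict).2 hu2
  have hv' : MemLp v 2 (volume.restrict (Set.uIoc a b)) :=
    MemLp.of_bound hv.restrict M (ae_of_all _ hvM)
  exact (memLp_two_iff_integrable_sq_norm (hu.add hv).restrict).1 (hu'.add hv')

theorem abs_intervalIntegral_sub_le {F G : ℝ → ℝ} {a b ε C : ℝ} (hab : a ≤ b)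
    (hF : IntervalIntegrable F volume a b) (hG : IntervalIntegrable G volume a b)
    (h : ∀ t, |F t - G t| ≤ ε * G t + C) :
    |(∫ t in a..b, F t) - ∫ t in a..b, G t| ≤ ε * (∫ t in a..b, G t) + C * (b - a) := by
  rw [← intervalIntegral.integral_sub hF hG]
  calc |∫ t in a..b, F t - G t| ≤ ∫ t in a..b, |F t - G t| :=
        intervalIntegral.abs_integral_le_integral_abs hab
    _ ≤ ∫ t in a..b, (ε * G t + C) :=
        intervalIntegral.integral_mono_on hab (hF.sub hG).abs
          ((hG.const_mul ε).add intervalIntegrable_const) fun t _ => h t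
    _ = ε * (∫ t in a..b, G t) + C * (b - a) := by
        rw [intervalIntegral.integral_add (hG.const_mul ε) intervalIntegrable_const,
          intervalIntegral.integral_const_mul, intervalIntegral.integral_const, smul_eq_mul,
          mul_comm C]

theorem isEquivalent_of_abs_sub_le {α : Type*} {l : Filter α} {Y G : α → ℝ}
    (hG : Tendsto G l atTop) (h : ∀ ε > 0, ∃ C, ∀ᶠ x in l, |Y x - G x| ≤ ε * G x + C) :
    Y ~[l] G := by
  refine isLittleO_iff.2 fun δ hδ => ?_
  obtain ⟨C, hC⟩ := h (δ / 2) (half_pos hδ)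
  filter_upwards [hC, hG.eventually_ge_atTop 0, hG.eventually_ge_atTop (2 * C / δ)]
    with x hx hG0 hGC
  rw [Real.norm_eq_abs, Real.norm_eq_abs, abs_of_nonneg hG0]
  have : 2 * C ≤ δ * G x := by rwa [div_le_iff₀' hδ] at hGC
  simp only [Pi.sub_apply]
  linarith

theorem tendsto_div_comp_sub_of_isEquivalent {Y G : ℝ → ℝ} {k L : ℝ} (hYG : Y ~[atTop] G)
    (hG : ∀ᶠ T in atTop, G T ≠ 0) (hshift : ∀ T, G T = k * G (T - L)) :
    Tendsto (fun T => Y T / Y (T - L)) atTop (𝓝 k) := by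
  have hsub : Tendsto (fun T : ℝ => T - L) atTop atTop :=
    tendsto_atTop_add_const_right _ _ tendsto_id
  have hdiv : (fun T => Y T / Y (T - L)) ~[atTop] fun T => G T / G (T - L) :=
    hYG.div (hYG.comp_tendsto hsub)
  refine hdiv.symm.tendsto_nhds (tendsto_const_nhds.congr' ?_)
  filter_upwards [hsub.eventually hG] with T hT
  rw [hshift T, mul_div_cancel_right₀ _ hT]

theorem isEquivalent_integral_norm_add_sq_of_bounded {E : Type*} [NormedAddCommGroup E]
    {u v : ℝ → E} {c M : ℝ} (hc : 0 ≤ c) (hu : AEStronglyMeasurable u)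
    (hv : AEStronglyMeasurable v)
    (hu2 : ∀ a b, IntervalIntegrable (fun t => ‖u t‖ ^ 2) volume a b)
    (hvM : ∀ t, ‖v t‖ ≤ M) (hgrow : Tendsto (fun T => ∫ t in T..(T + c), ‖u t‖ ^ 2) atTop atTop) :
    (fun T => ∫ t in T..(T + c), ‖u t + v t‖ ^ 2) ~[atTop]
      fun T => ∫ t in T..(T + c), ‖u t‖ ^ 2 := by
  refine isEquivalent_of_abs_sub_le hgrow fun ε hε =>
    ⟨(1 + ε⁻¹) * M ^ 2 * c, Eventually.of_forall fun T => ?_⟩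
  have hpt (t : ℝ) : |‖u t + v t‖ ^ 2 - ‖u t‖ ^ 2| ≤ ε * ‖u t‖ ^ 2 + (1 + ε⁻¹) * M ^ 2 := by
    grw [abs_norm_add_sq_sub_norm_sq_le (u t) (v t) hε, hvM t]
  have := abs_intervalIntegral_sub_le (le_add_of_nonneg_right hc)
    ((hu2 T (T + c)).norm_add_sq_of_bounded hu hv hvM) (hu2 _ _) hpt
  rwa [add_sub_cancel_left] at this

theorem Function.Periodic.integral_exp_mul_eq {g : ℝ → ℝ} {L : ℝ} (hg : Function.Periodic g L)
    (r a b : ℝ) :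
    ∫ t in a..b, Real.exp (r * t) * g t
      = Real.exp (r * L) * ∫ t in (a - L)..(b - L), Real.exp (r * t) * g t := by
  rw [← intervalIntegral.integral_comp_sub_right, ← intervalIntegral.integral_const_mul]
  congr 1 with t
  rw [hg.sub_eq, ← mul_assoc, ← Real.exp_add]
  ring_nf

theorem Function.Periodic.tendsto_integral_exp_mul_atTop {g : ℝ → ℝ} {L c r : ℝ}
    (hg : Function.Periodic g L) (hL : 0 ≤ L) (hLc : L ≤ c) (hr : 0 < r) (hg0 : ∀ t, 0 ≤ g t)
    (hint : ∀ a b, IntervalIntegrable g volume a b) (hpos : 0 < ∫ t in (0:ℝ)..L, g t) :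
    Tendsto (fun T => ∫ t in T..(T + c), Real.exp (r * t) * g t) atTop atTop := by
  have hbound (T : ℝ) : Real.exp (r * T) * ∫ t in (0:ℝ)..L, g t
      ≤ ∫ t in T..(T + c), Real.exp (r * t) * g t :=
    calc Real.exp (r * T) * ∫ t in (0:ℝ)..L, g t
        = Real.exp (r * T) * ∫ t in T..(T + L), g t := by
          rw [hg.intervalIntegral_add_eq T 0, zero_add]
      _ ≤ Real.exp (r * T) * ∫ t in T..(T + c), g t := by
          gcongr
          exact intervalIntegral.integral_mono_interval le_rfl (by linarith) (by linarith)
            (ae_of_all _ hg0) (hint _ _)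
      _ = ∫ t in T..(T + c), Real.exp (r * T) * g t :=
          (intervalIntegral.integral_const_mul _ _).symm
      _ ≤ ∫ t in T..(T + c), Real.exp (r * t) * g t := by
          refine intervalIntegral.integral_mono_on (by linarith) ((hint _ _).const_mul _)
            ((hint _ _).continuousOn_mul (by fun_prop)) fun t ht => ?_
          have := hg0 t
          gcongr
          exact ht.1
  refine tendsto_atTop_mono hbound (Tendsto.atTop_mul_const hpos ?_)
  exact Real.tendsto_exp_atTop.comp (tendsto_id.const_mul_atTop hr)

theorem norm_cexp_ofReal_mul_sq (f t : ℝ) :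
    ‖Complex.exp ((f : ℂ) * (t : ℂ))‖ ^ 2 = Real.exp (2 * f * t) := by
  rw [← Complex.ofReal_mul, Complex.norm_exp_ofReal, ← Real.exp_nat_mul]
  ring_nf

theorem perturbed_ratio_tendsto_general (L c f M : ℝ) (hL : 0 < L) (hc : c > L) (hf : 0 < f)
    (P : ℝ → ℂ) (hPmeas : Measurable P) (hPper : ∀ t : ℝ, P (t + L) = P t)
    (hPpos : 0 < ∫ t in (0:ℝ)..L, ‖P t‖ ^ 2)
    (hPint : IntervalIntegrable (fun t => ‖P t‖ ^ 2) volume 0 L)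
    (ye : ℝ → ℂ) (hye : ∀ t : ℝ, ye t = Complex.exp ((f : ℂ) * (t : ℂ)) * P t)
    (d : ℝ → ℂ) (hdmeas : Measurable d) (hdM : ∀ t : ℝ, ‖d t‖ ≤ M)
    (y : ℝ → ℂ) (hy : ∀ t : ℝ, y t = ye t + d t) :
    Filter.Tendsto
      (fun T : ℝ => Real.sqrt (∫ t in T..(T + c), ‖y t‖ ^ 2) /
        Real.sqrt (∫ t in (T - L)..(T + c - L), ‖y t‖ ^ 2))
      Filter.atTop (nhds (Real.exp (L * f))) := by
  set g : ℝ → ℝ := fun t => ‖P t‖ ^ 2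
  have hg : Function.Periodic g L := fun t => by simp only [g, hPper t]
  have hgint := hg.intervalIntegrable₀ hL.ne' hPint
  have hye_sq : (fun t => ‖ye t‖ ^ 2) = fun t => Real.exp (2 * f * t) * g t := by
    simp only [hye, norm_mul, mul_pow, norm_cexp_ofReal_mul_sq, g]
  set G : ℝ → ℝ := fun T => ∫ t in T..(T + c), ‖ye t‖ ^ 2
  set Y : ℝ → ℝ := fun T => ∫ t in T..(T + c), ‖y t‖ ^ 2
  have hG : Tendsto G atTop atTop := by
    simpa only [G, hye_sq] using hg.tendsto_integral_exp_mul_atTop hL.le hc.le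
      (by positivity) (fun t => by positivity) hgint hPpos
  have hYG : Y ~[atTop] G := by
    simp only [Y, hy]
    refine isEquivalent_integral_norm_add_sq_of_bounded (by linarith) ?_
      hdmeas.aestronglyMeasurable (fun a b => ?_) hdM hG
    · rw [funext hye]; fun_prop
    · rw [hye_sq]; exact (hgint a b).continuousOn_mul (by fun_prop)
  have hshift (T : ℝ) : G T = Real.exp (2 * f * L) * G (T - L) := by
    simp only [G, hye_sq, hg.integral_exp_mul_eq (2 * f) T, sub_add_eq_add_sub]
  have hlim : Tendsto (fun T => Y T / Y (T - L)) atTop (𝓝 (Real.exp (2 * f * L))) :=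
    tendsto_div_comp_sub_of_isEquivalent hYG (hG.eventually_gt_atTop 0 |>.mono fun _ h => h.ne')
      hshift
  rw [show Real.exp (L * f) = Real.sqrt (Real.exp (2 * f * L)) by rw [← Real.exp_half]; ring_nf]
  refine ((Real.continuous_sqrt.tendsto _).comp hlim).congr fun T => ?_
  have hY0 : 0 ≤ Y (T - L) :=
    intervalIntegral.integral_nonneg (by linarith) fun t _ => by positivity
  rw [Function.comp_apply, Real.sqrt_div' _ hY0]
  simp only [Y, sub_add_eq_add_sub]

/-- Convergence of the ratio of windowed norms of the corrupted output to `e^{Lf}` in the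
anti-stable case `f > 0` (equation (2.36) of the paper). -/
theorem perturbed_ratio_tendsto (L c f M : ℝ) (hL : 0 < L) (hc : c > L) (hf : 0 < f)
    (hM : 0 ≤ M)
    (P : ℝ → ℂ) (hPmeas : Measurable P) (hPper : ∀ t : ℝ, P (t + L) = P t)
    (hPpos : 0 < ∫ t in (0:ℝ)..L, ‖P t‖ ^ 2)
    (hPint : IntervalIntegrable (fun t => ‖P t‖ ^ 2) volume 0 L)
    (ye : ℝ → ℂ) (hye : ∀ t : ℝ, ye t = Complex.exp ((f : ℂ) * (t : ℂ)) * P t)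
    (d : ℝ → ℂ) (hdmeas : Measurable d) (hdM : ∀ t : ℝ, ‖d t‖ ≤ M)
    (y : ℝ → ℂ) (hy : ∀ t : ℝ, y t = ye t + d t) :
    Filter.Tendsto
      (fun T : ℝ => Real.sqrt (∫ t in T..(T + c), ‖y t‖ ^ 2) /
        Real.sqrt (∫ t in (T - L)..(T + c - L), ‖y t‖ ^ 2))
      Filter.atTop (nhds (Real.exp (L * f))) :=
  perturbed_ratio_tendsto_general L c f M hL hc hf P hPmeas hPper hPpos hPint ye hye d hdmeas hdM y
    hy
end

section
/- Let L > 0, f > 0, g ∈ ℝ, and 0 < ε ≤ 1/4. If (e^{Lf} − ε)/(1 + ε) ≤ e^{Lg} ≤ (e^{Lf} + ε)/(1 − ε), then |g − f| < 4ε/L. -/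
lemma log_ratio_lt (ε : ℝ) (hε0 : 0 < ε) (hε : ε ≤ 1 / 4) :
    Real.log ((1 + ε) / (1 - ε)) < 4 * ε := by
  have h1 : (0:ℝ) < 1 - ε := by linarith
  have h2 : (0:ℝ) < (1 + ε) / (1 - ε) := by positivity
  have h3 : Real.log ((1 + ε) / (1 - ε)) < (1 + ε) / (1 - ε) - 1 := by
    apply Real.log_lt_sub_one_of_pos h2
    intro h
    have : (1:ℝ) + ε = 1 - ε := by
      field_simp at h; linarith
    linarith
  have h4 : (1 + ε) / (1 - ε) - 1 = 2 * ε / (1 - ε) := by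
    field_simp; ring
  rw [h4] at h3
  have h5 : 2 * ε / (1 - ε) ≤ 2 * ε / (3/4 : ℝ) := by
    apply div_le_div_of_nonneg_left (by linarith) (by norm_num) (by linarith)
  calc Real.log ((1 + ε) / (1 - ε)) < 2 * ε / (1 - ε) := h3
    _ ≤ 2 * ε / (3/4) := h5
    _ < 4 * ε := by linarith

/-- Scalar error estimate (equations (2.47)–(2.49) of the paper): if `e^{Lg}` lies between
`(e^{Lf} − ε)/(1 + ε)` and `(e^{Lf} + ε)/(1 − ε)` with `0 < ε ≤ 1/4`, then `|g − f| < 4ε/L`. -/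
theorem scalar_error_estimate (L f g ε : ℝ) (hL : 0 < L) (hf : 0 < f)
    (hε0 : 0 < ε) (hε : ε ≤ 1 / 4)
    (h1 : (Real.exp (L * f) - ε) / (1 + ε) ≤ Real.exp (L * g))
    (h2 : Real.exp (L * g) ≤ (Real.exp (L * f) + ε) / (1 - ε)) :
    |g - f| < 4 * ε / L := by
  set E := Real.exp (L * f) with hE
  have hE1 : 1 ≤ E := by
    rw [hE]
    exact Real.one_le_exp (by positivity)
  have hεm : (0:ℝ) < 1 - ε := by linarith
  have hεp : (0:ℝ) < 1 + ε := by linarith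
  have hlog : Real.log ((1 + ε) / (1 - ε)) < 4 * ε := log_ratio_lt ε hε0 hε
  -- upper bound
  have hub : Real.exp (L * g) ≤ E * ((1 + ε) / (1 - ε)) := by
    refine h2.trans ?_
    rw [div_le_iff₀ hεm, mul_assoc, div_mul_cancel₀ _ hεm.ne']
    nlinarith
  have hub' : L * g ≤ L * f + Real.log ((1 + ε) / (1 - ε)) := by
    have := Real.log_le_log (Real.exp_pos _) hub
    rwa [Real.log_exp, Real.log_mul (by positivity) (by positivity), hE, Real.log_exp] at this
  -- lower bound
  have hlb : E * ((1 - ε) / (1 + ε)) ≤ Real.exp (L * g) := by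
    refine le_trans ?_ h1
    rw [le_div_iff₀ hεp, mul_assoc, div_mul_cancel₀ _ hεp.ne']
    nlinarith
  have hElb : (0:ℝ) < E * ((1 - ε) / (1 + ε)) := by positivity
  have hlb' : L * f + Real.log ((1 - ε) / (1 + ε)) ≤ L * g := by
    have := Real.log_le_log hElb hlb
    rwa [Real.log_exp, Real.log_mul (by positivity) (by positivity), hE, Real.log_exp] at this
  have hloginv : Real.log ((1 - ε) / (1 + ε)) = - Real.log ((1 + ε) / (1 - ε)) := by
    rw [← Real.log_inv]
    congr 1
    field_simp
  rw [abs_lt]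
  constructor
  · have h := (lt_div_iff₀ hL).mpr (show (f - g) * L < 4 * ε by nlinarith [hlb', hloginv, hlog])
    linarith
  · have h := (lt_div_iff₀ hL).mpr (show (g - f) * L < 4 * ε by nlinarith [hub', hlog])
    linarith
end

section
/- Let L > 0, f > 0, M ≥ 0, and let a : ℤ → ℂ satisfy Σ_{m∈ℤ} |a_m| < ∞. Set λ_m = f + i·(2πm/L), let d : ℝ → ℂ be measurable with |d(t)| ≤ M for all t, and let y(t) = Σ_{m∈ℤ} a_m e^{λ_m t} + d(t). For T₁ ≥ 0 define â_n(T₁) = (1/L) ∫_{T₁}^{T₁+L} y(t) e^{−λ_n t} dt. Then Σ_{n∈ℤ} |â_n(T₁) − a_n|² ≤ M² e^{−2 f T₁}. -/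
/-!
The frequencies satisfy `λ_m - λ_n = 2πi(m - n)/L`, so on any window of length `L` the
exponentials `e^{(λ_m - λ_n)t}` are orthogonal to the constants unless `m = n`; integrating the
absolutely convergent series against `e^{-λ_n t}` therefore returns exactly `L a_n`. What is left
of `â_n(T₁) - a_n` is the `n`-th Fourier coefficient on `(T₁, T₁ + L]` of `d(t) e^{-ft}`, and by
Parseval the sum of their squares is the mean square of `d(t) e^{-ft}` over the window, which is
at most `M² e^{-2fT₁}` because `f > 0` and `t ≥ T₁`.
-/

open MeasureTheory Complex intervalIntegral Set
open scoped Real Interval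

section Trigonometric

variable {L : ℝ}

theorem integral_exp_I_mul_two_pi_int_div (hL : 0 < L) (T : ℝ) (k : ℤ) :
    ∫ t in T..T + L, exp (I * ((2 * π * k / L : ℝ) : ℂ) * t) = if k = 0 then (L : ℂ) else 0 := by
  split_ifs with hk
  · simp [hk]
  · have hc : I * ((2 * π * k / L : ℝ) : ℂ) ≠ 0 := by simp [hk, hL.ne', Real.pi_ne_zero]
    have hcL : I * ((2 * π * k / L : ℝ) : ℂ) * L = k * (2 * π * I) := by
      have : (L : ℂ) ≠ 0 := ofReal_ne_zero.mpr hL.ne'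
      push_cast
      field_simp
    rw [integral_exp_mul_complex hc, ofReal_add, mul_add, exp_add, hcL,
      exp_int_mul_two_pi_mul_I, mul_one, sub_self, zero_div]

theorem norm_exp_I_mul_ofReal_mul_ofReal (ω t : ℝ) : ‖exp (I * ω * t)‖ = 1 := by
  rw [mul_assoc, ← ofReal_mul, norm_exp_I_mul_ofReal]

theorem continuous_tsum_mul_exp_I_mul {b : ℤ → ℂ} (hb : Summable (‖b ·‖)) (ω : ℤ → ℝ) :
    Continuous fun t : ℝ => ∑' m, b m * exp (I * ω m * t) :=
  continuous_tsum (fun m => by fun_prop) hb fun m t => by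
    rw [norm_mul, norm_exp_I_mul_ofReal_mul_ofReal, mul_one]

theorem integral_tsum_mul_exp_I_mul_two_pi_sub_div (hL : 0 < L) {b : ℤ → ℂ}
    (hb : Summable (‖b ·‖)) (T : ℝ) (n : ℤ) :
    ∫ t in T..T + L, ∑' m, b m * exp (I * ((2 * π * (m - n : ℤ) / L : ℝ) : ℂ) * t) = L * b n := by
  have hswap := intervalIntegral.hasSum_integral_of_dominated_convergence (μ := volume)
    (a := T) (b := T + L)
    (F := fun m t => b m * exp (I * ((2 * π * (m - n : ℤ) / L : ℝ) : ℂ) * t))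
    (fun m _ => ‖b m‖) (fun m => by fun_prop)
    (fun m => .of_forall fun t _ => by
      rw [norm_mul, norm_exp_I_mul_ofReal_mul_ofReal, mul_one])
    (.of_forall fun _ _ => hb) intervalIntegrable_const
    (.of_forall fun t _ => (hb.of_norm_bounded fun m => by
      rw [norm_mul, norm_exp_I_mul_ofReal_mul_ofReal, mul_one]).hasSum)
  rw [← hswap.tsum_eq]
  simp_rw [intervalIntegral.integral_const_mul, integral_exp_I_mul_two_pi_int_div hL,
    sub_eq_zero, mul_ite, mul_zero]
  rw [tsum_ite_eq, mul_comm]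

end Trigonometric

section ExponentialSeries

variable {L : ℝ} {c : ℂ} {lam : ℤ → ℂ}

theorem exp_mul_mul_exp_neg_mul_of_eq_add
    (hlam : ∀ m : ℤ, lam m = c + I * ((2 * π * (m : ℝ) / L : ℝ) : ℂ)) (m n : ℤ) (t : ℝ) :
    exp (lam m * t) * exp (-lam n * t) = exp (I * ((2 * π * (m - n : ℤ) / L : ℝ) : ℂ) * t) := by
  rw [← exp_add, hlam, hlam]
  push_cast
  ring_nf

theorem tsum_mul_exp_mul_mul_exp_neg_mul_of_eq_add
    (hlam : ∀ m : ℤ, lam m = c + I * ((2 * π * (m : ℝ) / L : ℝ) : ℂ)) (a : ℤ → ℂ) (n : ℤ) (t : ℝ) :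
    (∑' m, a m * exp (lam m * t)) * exp (-lam n * t) =
      ∑' m, a m * exp (I * ((2 * π * (m - n : ℤ) / L : ℝ) : ℂ) * t) := by
  rw [← tsum_mul_right]
  exact tsum_congr fun m => by rw [mul_assoc, exp_mul_mul_exp_neg_mul_of_eq_add hlam]

theorem continuous_tsum_mul_exp_mul_mul_exp_neg_mul
    (hlam : ∀ m : ℤ, lam m = c + I * ((2 * π * (m : ℝ) / L : ℝ) : ℂ)) {a : ℤ → ℂ}
    (ha : Summable (‖a ·‖)) (n : ℤ) :
    Continuous fun t : ℝ => (∑' m, a m * exp (lam m * t)) * exp (-lam n * t) := by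
  simp_rw [tsum_mul_exp_mul_mul_exp_neg_mul_of_eq_add hlam]
  exact continuous_tsum_mul_exp_I_mul ha _

theorem integral_tsum_mul_exp_mul_mul_exp_neg_mul (hL : 0 < L)
    (hlam : ∀ m : ℤ, lam m = c + I * ((2 * π * (m : ℝ) / L : ℝ) : ℂ)) {a : ℤ → ℂ}
    (ha : Summable (‖a ·‖)) (T : ℝ) (n : ℤ) :
    ∫ t in T..T + L, (∑' m, a m * exp (lam m * t)) * exp (-lam n * t) = L * a n := by
  simp_rw [tsum_mul_exp_mul_mul_exp_neg_mul_of_eq_add hlam]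
  exact integral_tsum_mul_exp_I_mul_two_pi_sub_div hL ha T n

theorem re_eq_of_eq_add (hlam : ∀ m : ℤ, lam m = c + I * ((2 * π * (m : ℝ) / L : ℝ) : ℂ))
    (m : ℤ) : (lam m).re = c.re := by
  simp [hlam]

theorem fourierCoeffOn_mul_exp_neg_mul
    (hlam : ∀ m : ℤ, lam m = c + I * ((2 * π * (m : ℝ) / L : ℝ) : ℂ)) {T : ℝ} (hT : T < T + L)
    (g : ℝ → ℂ) (n : ℤ) :
    fourierCoeffOn hT (fun t => g t * exp (-c * t)) n =
      1 / L * ∫ t in T..T + L, g t * exp (-lam n * t) := by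
  rw [fourierCoeffOn_eq_integral, add_sub_cancel_left, real_smul, ofReal_div, ofReal_one]
  congr 1
  refine intervalIntegral.integral_congr fun t _ => ?_
  rw [fourier_coe_apply, smul_eq_mul, hlam, mul_left_comm, ← exp_add]
  push_cast
  ring_nf

end ExponentialSeries

theorem norm_mul_exp_neg_mul_le {z w : ℂ} {M T t : ℝ} (hz : ‖z‖ ≤ M) (hw : 0 ≤ w.re)
    (ht : T ≤ t) : ‖z * exp (-w * t)‖ ≤ M * Real.exp (-w.re * T) := by
  rw [norm_mul, norm_exp, neg_mul, neg_re, re_mul_ofReal]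
  calc ‖z‖ * Real.exp (-(w.re * t)) ≤ ‖z‖ * Real.exp (-w.re * T) := by
        gcongr
        nlinarith
    _ ≤ M * Real.exp (-w.re * T) := by gcongr

theorem summable_sq_fourierCoeffOn_and_tsum_le {a b C : ℝ} {g : ℝ → ℂ} (hab : a < b)
    (hg : AEStronglyMeasurable g (volume.restrict (Ioc a b))) (hC : ∀ x ∈ Ioc a b, ‖g x‖ ≤ C) :
    Summable (fun n : ℤ => ‖fourierCoeffOn hab g n‖ ^ 2) ∧
      ∑' n : ℤ, ‖fourierCoeffOn hab g n‖ ^ 2 ≤ C ^ 2 := by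
  have hL2 : MemLp g 2 (volume.restrict (Ioc a b)) :=
    .of_bound hg C ((ae_restrict_iff' measurableSet_Ioc).mpr (.of_forall hC))
  have hsq : ∀ x ∈ Ι a b, ‖‖g x‖ ^ 2‖ ≤ C ^ 2 := fun x hx => by
    rw [uIoc_of_le hab.le] at hx
    rw [norm_pow, norm_norm]
    exact pow_le_pow_left₀ (norm_nonneg _) (hC x hx) 2
  have hint := norm_integral_le_of_norm_le_const hsq
  rw [abs_of_pos (sub_pos.mpr hab)] at hint
  refine ⟨(hasSum_sq_fourierCoeffOn hab hL2).summable, ?_⟩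
  rw [tsum_sq_fourierCoeffOn hab hL2, smul_eq_mul]
  calc (b - a)⁻¹ * ∫ x in a..b, ‖g x‖ ^ 2 ≤ (b - a)⁻¹ * (C ^ 2 * (b - a)) := by
        gcongr
        exact (le_abs_self _).trans hint
    _ = C ^ 2 := by rw [mul_comm (C ^ 2), inv_mul_cancel_left₀ (sub_pos.mpr hab).ne']

theorem reconstructed_coefficients_error_general (L f M : ℝ) (hL : 0 < L) (hf : 0 < f)
    (a : ℤ → ℂ) (ha : Summable fun m => ‖a m‖)
    (lam : ℤ → ℂ)
    (hlam : ∀ m : ℤ, lam m = (f : ℂ) + Complex.I * ((2 * Real.pi * (m : ℝ) / L : ℝ) : ℂ))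
    (d : ℝ → ℂ) (hdmeas : Measurable d) (hdM : ∀ t : ℝ, ‖d t‖ ≤ M)
    (y : ℝ → ℂ)
    (hy : ∀ t : ℝ, y t = (∑' m : ℤ, a m * Complex.exp (lam m * (t : ℂ))) + d t)
    (ahat : ℝ → ℤ → ℂ)
    (hahat : ∀ (T₁ : ℝ) (n : ℤ),
      ahat T₁ n = (1 / (L : ℂ)) * ∫ t in T₁..(T₁ + L), y t * Complex.exp (-(lam n) * (t : ℂ)))
    (T₁ : ℝ) :
    Summable (fun n : ℤ => ‖ahat T₁ n - a n‖ ^ 2) ∧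
    (∑' n : ℤ, ‖ahat T₁ n - a n‖ ^ 2) ≤ M ^ 2 * Real.exp (-2 * f * T₁) := by
  have hT : T₁ < T₁ + L := lt_add_of_pos_right T₁ hL
  have hbound : ∀ w : ℂ, w.re = f → ∀ t ∈ Ioc T₁ (T₁ + L),
      ‖d t * exp (-w * t)‖ ≤ M * Real.exp (-f * T₁) := fun w hw t ht => by
    have := norm_mul_exp_neg_mul_le (hdM t) (hw.symm ▸ hf.le : 0 ≤ w.re) ht.1.le
    rwa [hw] at this
  have hcoeff : ∀ n, ahat T₁ n - a n = fourierCoeffOn hT (fun t => d t * exp (-f * t)) n := by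
    intro n
    have hd_int : IntervalIntegrable (fun t => d t * exp (-lam n * t)) volume T₁ (T₁ + L) :=
      intervalIntegrable_const.mono_fun' (by fun_prop) <|
        (ae_restrict_iff' measurableSet_uIoc).mpr <| .of_forall fun t ht =>
          hbound _ (re_eq_of_eq_add hlam n) t (by rwa [uIoc_of_le hT.le] at ht)
    simp_rw [hahat, hy, add_mul]
    rw [integral_add
        ((continuous_tsum_mul_exp_mul_mul_exp_neg_mul hlam ha n).intervalIntegrable _ _) hd_int,
      integral_tsum_mul_exp_mul_mul_exp_neg_mul hL hlam ha, fourierCoeffOn_mul_exp_neg_mul hlam,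
      mul_add, ← mul_assoc, one_div_mul_cancel (ofReal_ne_zero.mpr hL.ne'), one_mul,
      add_sub_cancel_left]
  obtain ⟨hsum, hle⟩ := summable_sq_fourierCoeffOn_and_tsum_le hT (by fun_prop)
    (hbound f (ofReal_re f))
  simp_rw [hcoeff]
  refine ⟨hsum, hle.trans_eq ?_⟩
  rw [mul_pow, ← Real.exp_nat_mul]
  ring_nf

/-- Initial-value error estimate of Theorem 2.2 in modal-coefficient form: the coefficients
reconstructed from a length-`L` window of the disturbed output differ from the true ones by
an `ℓ²` error of at most `M e^{−fT₁}`. -/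
theorem reconstructed_coefficients_error (L f M : ℝ) (hL : 0 < L) (hf : 0 < f) (hM : 0 ≤ M)
    (a : ℤ → ℂ) (ha : Summable fun m => ‖a m‖)
    (lam : ℤ → ℂ)
    (hlam : ∀ m : ℤ, lam m = (f : ℂ) + Complex.I * ((2 * Real.pi * (m : ℝ) / L : ℝ) : ℂ))
    (d : ℝ → ℂ) (hdmeas : Measurable d) (hdM : ∀ t : ℝ, ‖d t‖ ≤ M)
    (y : ℝ → ℂ)
    (hy : ∀ t : ℝ, y t = (∑' m : ℤ, a m * Complex.exp (lam m * (t : ℂ))) + d t)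
    (ahat : ℝ → ℤ → ℂ)
    (hahat : ∀ (T₁ : ℝ) (n : ℤ),
      ahat T₁ n = (1 / (L : ℂ)) * ∫ t in T₁..(T₁ + L), y t * Complex.exp (-(lam n) * (t : ℂ)))
    (T₁ : ℝ) (hT₁ : 0 ≤ T₁) :
    Summable (fun n : ℤ => ‖ahat T₁ n - a n‖ ^ 2) ∧
    (∑' n : ℤ, ‖ahat T₁ n - a n‖ ^ 2) ≤ M ^ 2 * Real.exp (-2 * f * T₁) :=
  reconstructed_coefficients_error_general L f M hL hf a ha lam hlam d hdmeas hdM y hy ahat hahat T₁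
end

section
/- Let q ∈ ℝ with q > 1 and λ ∈ ℂ. There exists a twice continuously differentiable function u : ℝ → ℂ, not identically zero on [0,1], such that u''(x) = λ² u(x) for all x ∈ [0,1], u(0) = 0, and u'(1) = q λ u(1), if and only if there exists n ∈ ℤ with λ = (1/2)·ln((q+1)/(q−1)) + i n π. -/
/-!
Comparing a solution `u` of `u'' = λ²u` with `sinh (λx)` and `cosh (λx)` through their
Wronskians, which are constant, gives `u'(x) = u'(0) cosh (λx)` and `λ u(x) = u'(0) sinh (λx)`
once `u(0) = 0`. A nontrivial solution has `u'(0) ≠ 0`, so the boundary condition at `1` becomes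
`cosh λ = q sinh λ`, i.e. `e^{2λ} = (q+1)/(q-1)`; conversely `sinh (λx)` is then an eigenfunction.
-/

open Complex Set

theorem cosh_eq_mul_sinh_iff_exp_two_mul {q : ℂ} (hq : q ≠ 1) (z : ℂ) :
    cosh z = q * sinh z ↔ exp (2 * z) = (q + 1) / (q - 1) := by
  have hexp : exp z * exp (-z) = 1 := by rw [← exp_add, add_neg_cancel, exp_zero]
  rw [two_mul, exp_add, eq_div_iff (sub_ne_zero.mpr hq), ← cosh_add_sinh, ← cosh_sub_sinh] at *
  constructor
  · intro h
    linear_combination (-2 * (cosh z + sinh z)) * h + (q + 1) * hexp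
  · intro h
    linear_combination
      (-(cosh z - sinh z) / 2) * h + ((q - 1) * (cosh z + sinh z) / 2) * hexp

theorem exp_two_mul_eq_iff {r : ℂ} (hr : r ≠ 0) (z : ℂ) :
    exp (2 * z) = r ↔ ∃ n : ℤ, z = log r / 2 + n * Real.pi * I := by
  conv_lhs => rw [← exp_log hr, exp_eq_exp_iff_exists_int]
  refine exists_congr fun n => ⟨fun h => ?_, fun h => ?_⟩
  · linear_combination h / 2
  · linear_combination 2 * h

theorem hasDerivAt_sinh_mul_ofReal (c : ℂ) (x : ℝ) :
    HasDerivAt (fun y : ℝ => sinh (c * y)) (c * cosh (c * x)) x := by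
  simpa [mul_comm] using (((hasDerivAt_id (x : ℂ)).const_mul c).csinh).comp_ofReal

theorem hasDerivAt_cosh_mul_ofReal (c : ℂ) (x : ℝ) :
    HasDerivAt (fun y : ℝ => cosh (c * y)) (c * sinh (c * x)) x := by
  simpa [mul_comm] using (((hasDerivAt_id (x : ℂ)).const_mul c).ccosh).comp_ofReal

theorem eq_of_hasDerivAt_eq_zero_on_Icc {E : Type*} [NormedAddCommGroup E] [NormedSpace ℝ E]
    {f : ℝ → E} {a b : ℝ} (hf : ∀ x ∈ Icc a b, HasDerivAt f 0 x) :
    ∀ x ∈ Icc a b, f x = f a :=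
  constant_of_has_deriv_right_zero (fun x hx => (hf x hx).continuousAt.continuousWithinAt)
    fun x hx => (hf x (Ico_subset_Icc_self hx)).hasDerivWithinAt

theorem hasDerivAt_wronskian_eq_zero {𝕜 𝔸 : Type*} [NontriviallyNormedField 𝕜]
    [NormedCommRing 𝔸] [NormedAlgebra 𝕜 𝔸] {f f' g g' : 𝕜 → 𝔸} {c : 𝔸} {x : 𝕜}
    (hf : HasDerivAt f (f' x) x) (hf' : HasDerivAt f' (c * f x) x)
    (hg : HasDerivAt g (g' x) x) (hg' : HasDerivAt g' (c * g x) x) :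
    HasDerivAt (fun y => f' y * g y - f y * g' y) 0 x :=
  ((hf'.mul hg).sub (hf.mul hg')).congr_deriv (by ring)

section SecondOrderODE

variable {u u' : ℝ → ℂ} {c : ℂ} {b : ℝ}

theorem wronskians_sinh_cosh_eq_on_Icc (hu : ∀ x ∈ Icc 0 b, HasDerivAt u (u' x) x)
    (hu' : ∀ x ∈ Icc 0 b, HasDerivAt u' (c ^ 2 * u x) x) {x : ℝ} (hx : x ∈ Icc 0 b) :
    u' x * sinh (c * x) - u x * (c * cosh (c * x)) = -u 0 * c ∧
      u' x * cosh (c * x) - u x * (c * sinh (c * x)) = u' 0 := by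
  have hsinh' (y : ℝ) : HasDerivAt (fun y : ℝ => c * cosh (c * y)) (c ^ 2 * sinh (c * y)) y :=
    ((hasDerivAt_cosh_mul_ofReal c y).const_mul c).congr_deriv (by ring)
  have hcosh' (y : ℝ) : HasDerivAt (fun y : ℝ => c * sinh (c * y)) (c ^ 2 * cosh (c * y)) y :=
    ((hasDerivAt_sinh_mul_ofReal c y).const_mul c).congr_deriv (by ring)
  constructor
  · simpa using eq_of_hasDerivAt_eq_zero_on_Icc (fun y hy => hasDerivAt_wronskian_eq_zero
      (hu y hy) (hu' y hy) (hasDerivAt_sinh_mul_ofReal c y) (hsinh' y)) x hx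
  · simpa using eq_of_hasDerivAt_eq_zero_on_Icc (fun y hy => hasDerivAt_wronskian_eq_zero
      (hu y hy) (hu' y hy) (hasDerivAt_cosh_mul_ofReal c y) (hcosh' y)) x hx

theorem deriv_eq_cosh_sinh_on_Icc (hu : ∀ x ∈ Icc 0 b, HasDerivAt u (u' x) x)
    (hu' : ∀ x ∈ Icc 0 b, HasDerivAt u' (c ^ 2 * u x) x) {x : ℝ} (hx : x ∈ Icc 0 b) :
    u' x = u' 0 * cosh (c * x) + c * u 0 * sinh (c * x) := by
  obtain ⟨hs, hc⟩ := wronskians_sinh_cosh_eq_on_Icc hu hu' hx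
  linear_combination cosh (c * x) * hc - sinh (c * x) * hs - u' x * cosh_sq_sub_sinh_sq (c * x)

theorem mul_eq_sinh_cosh_on_Icc (hu : ∀ x ∈ Icc 0 b, HasDerivAt u (u' x) x)
    (hu' : ∀ x ∈ Icc 0 b, HasDerivAt u' (c ^ 2 * u x) x) {x : ℝ} (hx : x ∈ Icc 0 b) :
    c * u x = u' 0 * sinh (c * x) + c * u 0 * cosh (c * x) := by
  obtain ⟨hs, hc⟩ := wronskians_sinh_cosh_eq_on_Icc hu hu' hx
  linear_combination
    sinh (c * x) * hc - cosh (c * x) * hs - c * u x * cosh_sq_sub_sinh_sq (c * x)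

end SecondOrderODE

def IsWaveEigenfunction (q lam : ℂ) (u : ℝ → ℂ) : Prop :=
  ContDiff ℝ 2 u ∧ (¬ ∀ x ∈ Icc (0:ℝ) 1, u x = 0) ∧
    (∀ x ∈ Icc (0:ℝ) 1, deriv (deriv u) x = lam ^ 2 * u x) ∧ u 0 = 0 ∧ deriv u 1 = q * lam * u 1

theorem IsWaveEigenfunction.cosh_eq_mul_sinh {q lam : ℂ} {u : ℝ → ℂ}
    (hu : IsWaveEigenfunction q lam u) : cosh lam = q * sinh lam := by
  obtain ⟨hC2, hnz, hode, h0, h1⟩ := hu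
  have hasDeriv (x : ℝ) : HasDerivAt u (deriv u x) x :=
    (hC2.differentiable two_ne_zero x).hasDerivAt
  have hasDeriv' : ∀ x ∈ Icc (0:ℝ) 1, HasDerivAt (deriv u) (lam ^ 2 * u x) x := fun x hx =>
    hode x hx ▸ (hC2.differentiable_deriv_two x).hasDerivAt
  have hderiv : ∀ x ∈ Icc (0:ℝ) 1, deriv u x = deriv u 0 * cosh (lam * x) := fun x hx => by
    simpa [h0] using deriv_eq_cosh_sinh_on_Icc (fun x _ => hasDeriv x) hasDeriv' hx
  have hmul : lam * u 1 = deriv u 0 * sinh lam := by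
    simpa [h0] using mul_eq_sinh_cosh_on_Icc (fun x _ => hasDeriv x) hasDeriv'
      (right_mem_Icc.mpr zero_le_one)
  have hderiv0 : deriv u 0 ≠ 0 := by
    refine fun hzero => hnz fun x hx => ?_
    have hconst := eq_of_hasDerivAt_eq_zero_on_Icc (f := u)
      (fun y hy => by simpa [hzero, hderiv y hy] using hasDeriv y) x hx
    rw [hconst, h0]
  apply mul_left_cancel₀ hderiv0
  simpa [hderiv 1 (right_mem_Icc.mpr zero_le_one), hmul, mul_assoc, mul_left_comm] using h1

theorem isWaveEigenfunction_sinh_mul {q lam : ℂ} (h : cosh lam = q * sinh lam) :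
    IsWaveEigenfunction q lam fun x : ℝ => sinh (lam * x) := by
  have hderiv : deriv (fun x : ℝ => sinh (lam * x)) = fun x : ℝ => lam * cosh (lam * x) :=
    funext fun x => (hasDerivAt_sinh_mul_ofReal lam x).deriv
  have hsinh : sinh lam ≠ 0 := fun hs => by
    simpa [hs, h] using cosh_sq_sub_sinh_sq lam
  refine ⟨(contDiff_sinh.restrict_scalars ℝ).comp (contDiff_const.mul ofRealCLM.contDiff),
    fun hzero => hsinh (by simpa using hzero 1 (right_mem_Icc.mpr zero_le_one)),
    fun x _ => ?_, by simp, ?_⟩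
  · rw [hderiv, ((hasDerivAt_cosh_mul_ofReal lam x).const_mul lam).deriv]
    ring
  · simp only [hderiv, ofReal_one, mul_one, h]
    ring

/-- Eigenvalue characterization (Lemma 3.1, case `q > 1`) for the anti-stable wave equation:
the boundary value problem `u'' = λ²u`, `u(0) = 0`, `u'(1) = qλu(1)` has a nontrivial solution
iff `λ = (1/2)ln((q+1)/(q−1)) + inπ` for some integer `n`. -/
theorem wave_eigenvalues_q_gt_one (q : ℝ) (hq : 1 < q) (lam : ℂ) :
    (∃ u : ℝ → ℂ, ContDiff ℝ 2 u ∧ (¬ ∀ x ∈ Set.Icc (0:ℝ) 1, u x = 0) ∧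
      (∀ x ∈ Set.Icc (0:ℝ) 1, deriv (deriv u) x = lam ^ 2 * u x) ∧
      u 0 = 0 ∧ deriv u 1 = (q : ℂ) * lam * u 1) ↔
    ∃ n : ℤ, lam = ((Real.log ((q + 1) / (q - 1)) : ℂ)) / 2 + (n : ℂ) * (Real.pi : ℂ) * Complex.I := by
  have hq1 : (q : ℂ) ≠ 1 := by exact_mod_cast hq.ne'
  have hratio : 0 < (q + 1) / (q - 1) := div_pos (by linarith) (by linarith)
  have hlog : (Real.log ((q + 1) / (q - 1)) : ℂ) = log ((q + 1) / (q - 1)) := by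
    rw [ofReal_log hratio.le]
    push_cast
    rfl
  rw [hlog, ← exp_two_mul_eq_iff (by exact_mod_cast hratio.ne'),
    ← cosh_eq_mul_sinh_iff_exp_two_mul hq1]
  exact ⟨fun ⟨_, hu⟩ => IsWaveEigenfunction.cosh_eq_mul_sinh hu,
    fun h => ⟨_, isWaveEigenfunction_sinh_mul h⟩⟩
end

section
/- Let q ∈ ℝ with q > 2, and for n ∈ ℤ set λ_n = (1/2)·ln((q+2)/(q−2)) + i n π and R = ((q+2)/(q−2))^{1/4}. Then for every n ∈ ℤ, (√2/2)·(R − R⁻¹) ≤ |√2 · cosh(λ_n/2)| ≤ (√2/2)·(R + R⁻¹). -/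
/-!
Since `|cosh (a + b i)|² = sinh² a + cos² b`, the modulus of `cosh z` lies between `|sinh (re z)|`
and `cosh (re z)`, whatever the imaginary part. Here `re (λ_n / 2) = log R`, and
`sinh (log R) = (R - R⁻¹) / 2`, `cosh (log R) = (R + R⁻¹) / 2`.
-/

open Complex

theorem Complex.cosh_eq_re_im (z : ℂ) :
    cosh z = ↑(Real.cosh z.re * Real.cos z.im) + ↑(Real.sinh z.re * Real.sin z.im) * I := by
  conv_lhs => rw [← re_add_im z]
  rw [cosh_add, cosh_mul_I, sinh_mul_I]
  push_cast
  ring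

theorem Complex.sq_norm_cosh (z : ℂ) :
    ‖cosh z‖ ^ 2 = Real.sinh z.re ^ 2 + Real.cos z.im ^ 2 := by
  rw [cosh_eq_re_im, norm_add_mul_I, Real.sq_sqrt (by positivity)]
  nlinarith [Real.cosh_sq z.re, Real.sin_sq_add_cos_sq z.im]

theorem Complex.norm_cosh_le_cosh_re (z : ℂ) : ‖cosh z‖ ≤ Real.cosh z.re := by
  refine (pow_le_pow_iff_left₀ (norm_nonneg _) (Real.cosh_pos _).le two_ne_zero).1 ?_
  rw [sq_norm_cosh, Real.cosh_sq]
  linarith [Real.cos_sq_le_one z.im]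

theorem Complex.abs_sinh_re_le_norm_cosh (z : ℂ) : |Real.sinh z.re| ≤ ‖cosh z‖ := by
  rw [← abs_norm, ← sq_le_sq, sq_norm_cosh]
  linarith [sq_nonneg (Real.cos z.im)]

/-- Uniform two-sided bound on the observation coefficients `κ_n = √2 cosh(λ_n/2)` for the
two connected strings system (Section 5 of the paper). -/
theorem strings_observation_coefficient_bounds (q : ℝ) (hq : 2 < q) (n : ℤ)
    (lam : ℂ)
    (hlam : lam = ((Real.log ((q + 2) / (q - 2)) : ℂ)) / 2 + (n : ℂ) * (Real.pi : ℂ) * Complex.I)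
    (R : ℝ) (hR : R = ((q + 2) / (q - 2)) ^ ((1 : ℝ) / 4)) :
    Real.sqrt 2 / 2 * (R - R⁻¹) ≤ ‖(Real.sqrt 2 : ℂ) * Complex.cosh (lam / 2)‖ ∧
    ‖(Real.sqrt 2 : ℂ) * Complex.cosh (lam / 2)‖ ≤ Real.sqrt 2 / 2 * (R + R⁻¹) := by
  have hx : 0 < (q + 2) / (q - 2) := div_pos (by linarith) (by linarith)
  have hRpos : 0 < R := hR ▸ Real.rpow_pos_of_pos hx _
  have hre : (lam / 2).re = Real.log R := by
    rw [hR, Real.log_rpow hx, hlam]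
    simp only [div_ofNat_re, add_re, ofReal_re, mul_re, intCast_re, intCast_im, ofReal_im,
      mul_zero, sub_zero, I_re, mul_im, zero_mul, add_zero, I_im, mul_one, sub_self, one_div]
    ring
  have hnorm : ‖(Real.sqrt 2 : ℂ) * cosh (lam / 2)‖ = Real.sqrt 2 * ‖cosh (lam / 2)‖ := by
    simp
  rw [hnorm]
  constructor
  · calc Real.sqrt 2 / 2 * (R - R⁻¹) = Real.sqrt 2 * Real.sinh (lam / 2).re := by
          rw [hre, Real.sinh_log hRpos]; ring
      _ ≤ Real.sqrt 2 * ‖cosh (lam / 2)‖ := by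
          gcongr
          exact (le_abs_self _).trans (abs_sinh_re_le_norm_cosh _)
  · calc Real.sqrt 2 * ‖cosh (lam / 2)‖ ≤ Real.sqrt 2 * Real.cosh (lam / 2).re := by
          gcongr
          exact norm_cosh_le_cosh_re _
      _ = Real.sqrt 2 / 2 * (R + R⁻¹) := by
          rw [hre, Real.cosh_log hRpos]; ring
end

section
/- Let q ∈ ℝ with q > 1, and for n ∈ ℤ set λ_n = (1/2)·ln((q+1)/(q−1)) + i n π. Let a : ℤ → ℂ satisfy Σ_{n∈ℤ} |a_n| < ∞ with a not identically zero, and define y(t) = Σ_{n∈ℤ} a_n e^{λ_n t}. Then for all T₁, T₂ with 2 ≤ T₁ < T₂ − 2: ‖y‖_{L²(T₁,T₂)} − ‖y‖_{L²(T₁−2,T₂−2)} > 0 and q = ( ‖y‖_{L²(T₁,T₂)} + ‖y‖_{L²(T₁−2,T₂−2)} ) / ( ‖y‖_{L²(T₁,T₂)} − ‖y‖_{L²(T₁−2,T₂−2)} ). -/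
/-!
Write `r = (q + 1) / (q - 1)`, so that `λₙ = (log r) / 2 + i n π`. Then
`y(t) = r^(t/2) g(t)` with `g(t) = ∑ aₙ e^(i n π t)` 2-periodic, hence `y(t + 2) = r y(t)` and the
`L²` norm over `[T₁, T₂]` is exactly `r` times the one over `[T₁ - 2, T₂ - 2]`. The latter is
positive: the coefficients of `g` are recovered as `aₘ = ½ ∫₀² g(t) e^(-i m π t) dt`, so `a ≠ 0`
gives `g ≠ 0` on every period. Finally `r ↦ (r + 1) / (r - 1)` inverts `q ↦ (q + 1) / (q - 1)`.
-/

open MeasureTheory Set Function Complex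

lemma integral_exp_int_mul_pi_I_mul (k : ℤ) :
    ∫ t in (0 : ℝ)..2, exp (k * Real.pi * I * t) = if k = 0 then 2 else 0 := by
  split_ifs with hk
  · simp [hk]
  · have hc : (k : ℂ) * Real.pi * I ≠ 0 := by simp [hk, Real.pi_ne_zero]
    have hperiod : exp (k * Real.pi * I * 2) = 1 := by
      rw [← exp_int_mul_two_pi_mul_I k]; ring_nf
    simp [integral_exp_mul_complex hc, hperiod]

noncomputable def fourierSum (a : ℤ → ℂ) (t : ℝ) : ℂ :=
  ∑' n, a n * exp (n * Real.pi * I * t)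

lemma norm_mul_exp_int_mul_pi_I_mul (c : ℂ) (k : ℤ) (t : ℝ) :
    ‖c * exp (k * Real.pi * I * t)‖ = ‖c‖ := by
  simp [norm_exp]

section FourierSum

variable {a : ℤ → ℂ}

lemma fourierSum_periodic (a : ℤ → ℂ) : Periodic (fourierSum a) 2 := by
  intro t
  refine tsum_congr fun n => congrArg (a n * ·) ?_
  rw [show (n : ℂ) * Real.pi * I * ↑(t + 2) = n * Real.pi * I * t + n * (2 * Real.pi * I) by
    push_cast; ring, exp_add, exp_int_mul_two_pi_mul_I, mul_one]

lemma continuous_fourierSum (ha : Summable (‖a ·‖)) : Continuous (fourierSum a) :=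
  continuous_tsum (fun n => by fun_prop) ha fun n t =>
    (norm_mul_exp_int_mul_pi_I_mul (a n) n t).le

lemma integral_fourierSum_mul_exp (ha : Summable (‖a ·‖)) (m : ℤ) :
    ∫ t in (0 : ℝ)..2, fourierSum a t * exp (-m * Real.pi * I * t) = 2 * a m := by
  set F : ℤ → ℝ → ℂ := fun n t => a n * exp ((n - m : ℤ) * Real.pi * I * t)
  have hF : ∀ t, HasSum (F · t) (fourierSum a t * exp (-m * Real.pi * I * t)) := by
    intro t
    have hs : Summable fun n => a n * exp (n * Real.pi * I * t) :=
      ha.of_norm_bounded fun n => (norm_mul_exp_int_mul_pi_I_mul (a n) n t).le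
    refine (hs.hasSum.mul_right (exp (-m * Real.pi * I * t))).congr_fun fun n => ?_
    simp only [F, mul_assoc, ← exp_add]
    push_cast; ring_nf
  have hswap : HasSum (fun n => ∫ t in (0 : ℝ)..2, F n t)
      (∫ t in (0 : ℝ)..2, fourierSum a t * exp (-m * Real.pi * I * t)) :=
    intervalIntegral.hasSum_integral_of_dominated_convergence (fun n _ => ‖a n‖)
      (fun n => by fun_prop)
      (fun n => .of_forall fun t _ => (norm_mul_exp_int_mul_pi_I_mul (a n) _ t).le)
      (.of_forall fun _ _ => ha) intervalIntegrable_const (.of_forall fun t _ => hF t)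
  have hmodes : (fun n => ∫ t in (0 : ℝ)..2, F n t) = fun n => if n = m then 2 * a m else 0 := by
    ext n
    simp only [F, intervalIntegral.integral_const_mul, integral_exp_int_mul_pi_I_mul, sub_eq_zero]
    split_ifs with h <;> simp [h, mul_comm]
  rw [hmodes] at hswap
  exact hswap.unique (hasSum_ite_eq m _)

lemma eq_zero_of_fourierSum_eq_zero (ha : Summable (‖a ·‖)) (h : ∀ t, fourierSum a t = 0) :
    a = 0 := by
  ext m
  simpa [h] using (integral_fourierSum_mul_exp ha m).symm

lemma exists_fourierSum_ne_zero_mem_Ioc (ha : Summable (‖a ·‖)) (ha0 : a ≠ 0) (c : ℝ) :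
    ∃ t ∈ Ioc c (c + 2), fourierSum a t ≠ 0 := by
  obtain ⟨t₀, ht₀⟩ := not_forall.1 (mt (eq_zero_of_fourierSum_eq_zero ha) ha0)
  obtain ⟨t, ht, hteq⟩ := (fourierSum_periodic a).exists_mem_Ioc two_pos t₀ c
  exact ⟨t, ht, hteq ▸ ht₀⟩

lemma tsum_mul_exp_add_mul_pi_I (a : ℤ → ℂ) (σ : ℂ) (t : ℝ) :
    ∑' n, a n * exp ((σ + n * Real.pi * I) * t) = exp (σ * t) * fourierSum a t := by
  rw [fourierSum, ← tsum_mul_left]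
  refine tsum_congr fun n => ?_
  rw [add_mul, exp_add]
  ring

end FourierSum

lemma Function.Periodic.exp_mul_mul_apply_add {g : ℝ → ℂ} {p : ℝ} (hg : Periodic g p) (z : ℂ)
    (t : ℝ) : exp (z * ↑(t + p)) * g (t + p) = exp (z * p) * (exp (z * t) * g t) := by
  rw [hg t, ofReal_add, mul_add, exp_add]
  ring

section IntervalNormSq

variable {𝕜 E : Type*} [NormedField 𝕜] [NormedAddCommGroup E] [NormedSpace 𝕜 E]

lemma intervalIntegral_norm_sq_eq_of_apply_add_eq_smul {y : ℝ → E} {p : ℝ} {c : 𝕜}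
    (h : ∀ t, y (t + p) = c • y t) (a b : ℝ) :
    ∫ t in a..b, ‖y t‖ ^ 2 = ‖c‖ ^ 2 * ∫ t in (a - p)..(b - p), ‖y t‖ ^ 2 := by
  rw [← intervalIntegral.integral_comp_sub_right, ← intervalIntegral.integral_const_mul]
  refine intervalIntegral.integral_congr fun t _ => ?_
  rw [← mul_pow, ← norm_smul, ← h, sub_add_cancel]

lemma sqrt_intervalIntegral_norm_sq_eq_of_apply_add_eq_smul {y : ℝ → E} {p : ℝ} {c : 𝕜}
    (h : ∀ t, y (t + p) = c • y t) (a b : ℝ) :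
    √(∫ t in a..b, ‖y t‖ ^ 2) = ‖c‖ * √(∫ t in (a - p)..(b - p), ‖y t‖ ^ 2) := by
  rw [intervalIntegral_norm_sq_eq_of_apply_add_eq_smul h, Real.sqrt_mul (by positivity),
    Real.sqrt_sq (norm_nonneg c)]

lemma intervalIntegral_norm_sq_pos {y : ℝ → E} (hy : Continuous y) {a b : ℝ} (hab : a < b)
    (h : ∃ t ∈ Icc a b, y t ≠ 0) : 0 < ∫ t in a..b, ‖y t‖ ^ 2 :=
  intervalIntegral.integral_pos hab (by fun_prop) (fun _ _ => by positivity)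
    (h.imp fun _ ⟨ht, hyt⟩ => ⟨ht, by positivity⟩)

end IntervalNormSq

lemma sub_pos_and_eq_add_div_sub_of_eq_mul {q A B : ℝ} (hq : 1 < q) (hB : 0 < B)
    (hA : A = (q + 1) / (q - 1) * B) : 0 < A - B ∧ q = (A + B) / (A - B) := by
  have hq1 : 0 < q - 1 := by linarith
  subst hA
  constructor
  · rw [← sub_one_mul]
    exact mul_pos (sub_pos.2 ((one_lt_div hq1).2 (by linarith))) hB
  · field_simp
    ring

theorem wave_exact_identification_general (q : ℝ) (hq : 1 < q)
    (lam : ℤ → ℂ)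
    (hlam : ∀ n : ℤ,
      lam n = ((Real.log ((q + 1) / (q - 1)) : ℂ)) / 2 + (n : ℂ) * (Real.pi : ℂ) * Complex.I)
    (a : ℤ → ℂ) (ha : Summable fun n => ‖a n‖) (ha0 : a ≠ 0)
    (y : ℝ → ℂ) (hy : ∀ t : ℝ, y t = ∑' n : ℤ, a n * Complex.exp (lam n * (t : ℂ)))
    (T₁ T₂ : ℝ) (h2 : T₁ < T₂ - 2) :
    0 < Real.sqrt (∫ t in T₁..T₂, ‖y t‖ ^ 2) -
        Real.sqrt (∫ t in (T₁ - 2)..(T₂ - 2), ‖y t‖ ^ 2) ∧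
    q = (Real.sqrt (∫ t in T₁..T₂, ‖y t‖ ^ 2) +
          Real.sqrt (∫ t in (T₁ - 2)..(T₂ - 2), ‖y t‖ ^ 2)) /
        (Real.sqrt (∫ t in T₁..T₂, ‖y t‖ ^ 2) -
          Real.sqrt (∫ t in (T₁ - 2)..(T₂ - 2), ‖y t‖ ^ 2)) := by
  set r := (q + 1) / (q - 1)
  have hr : 0 < r := div_pos (by linarith) (by linarith)
  have hy' : ∀ t, y t = exp (Real.log r / 2 * t) * fourierSum a t := fun t => by
    simp only [hy, hlam, tsum_mul_exp_add_mul_pi_I]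
  have hshift : ∀ t, y (t + 2) = (r : ℂ) • y t := fun t => by
    rw [hy', hy', (fourierSum_periodic a).exp_mul_mul_apply_add, smul_eq_mul,
      show (Real.log r : ℂ) / 2 * (2 : ℝ) = Real.log r by push_cast; ring, ← ofReal_exp,
      Real.exp_log hr]
  have hcont : Continuous y := by
    rw [funext hy']
    have := continuous_fourierSum ha
    fun_prop
  obtain ⟨t, ht, hyt⟩ := exists_fourierSum_ne_zero_mem_Ioc ha ha0 (T₁ - 2)
  have hB : 0 < ∫ t in (T₁ - 2)..(T₂ - 2), ‖y t‖ ^ 2 :=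
    intervalIntegral_norm_sq_pos hcont (by linarith)
      ⟨t, ⟨ht.1.le, by linarith [ht.2]⟩, by rw [hy']; exact mul_ne_zero (exp_ne_zero _) hyt⟩
  refine sub_pos_and_eq_add_div_sub_of_eq_mul hq (Real.sqrt_pos.2 hB) ?_
  rw [sqrt_intervalIntegral_norm_sq_eq_of_apply_add_eq_smul hshift, norm_real,
    Real.norm_of_nonneg hr.le]

/-- Corollary 3.1 of the paper (coefficient-identification part) for the anti-stable wave
equation: closed-form exact recovery of the anti-damping coefficient `q` from two shifted
windows of the exact output. -/
theorem wave_exact_identification (q : ℝ) (hq : 1 < q)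
    (lam : ℤ → ℂ)
    (hlam : ∀ n : ℤ,
      lam n = ((Real.log ((q + 1) / (q - 1)) : ℂ)) / 2 + (n : ℂ) * (Real.pi : ℂ) * Complex.I)
    (a : ℤ → ℂ) (ha : Summable fun n => ‖a n‖) (ha0 : a ≠ 0)
    (y : ℝ → ℂ) (hy : ∀ t : ℝ, y t = ∑' n : ℤ, a n * Complex.exp (lam n * (t : ℂ)))
    (T₁ T₂ : ℝ) (h1 : 2 ≤ T₁) (h2 : T₁ < T₂ - 2) :
    0 < Real.sqrt (∫ t in T₁..T₂, ‖y t‖ ^ 2) -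
        Real.sqrt (∫ t in (T₁ - 2)..(T₂ - 2), ‖y t‖ ^ 2) ∧
    q = (Real.sqrt (∫ t in T₁..T₂, ‖y t‖ ^ 2) +
          Real.sqrt (∫ t in (T₁ - 2)..(T₂ - 2), ‖y t‖ ^ 2)) /
        (Real.sqrt (∫ t in T₁..T₂, ‖y t‖ ^ 2) -
          Real.sqrt (∫ t in (T₁ - 2)..(T₂ - 2), ‖y t‖ ^ 2)) :=
  wave_exact_identification_general q hq lam hlam a ha ha0 y hy T₁ T₂ h2
end

section
/- Let q ∈ ℝ with q > 2, and for n ∈ ℤ set λ_n = (1/2)·ln((q+2)/(q−2)) + i n π. Let b : ℤ → ℂ satisfy Σ_{n∈ℤ} |b_n| < ∞ with b not identically zero, let y_e(t) = Σ_{n∈ℤ} b_n e^{λ_n t}, let d : ℝ → ℂ be measurable with |d(t)| ≤ M for all t and some M ≥ 0, and set y = y_e + d. Fix c > 2 and for T ∈ ℝ define q_T = 2·( ‖y‖_{L²(T,T+c)} + ‖y‖_{L²(T−2,T+c−2)} ) / ( ‖y‖_{L²(T,T+c)} − ‖y‖_{L²(T−2,T+c−2)} ). Then q_T → q as T → +∞.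 -/
/-!
Write `f = log((q+2)/(q-2))/2`. The exact output is `e^{f t} g(t)` with `g` the `2`-periodic
Fourier series `∑ bₙ e^{iπnt}`, which is continuous and, by uniqueness of Fourier coefficients,
has positive `L²` norm over a period. Hence the exact window norm `a(T) = ‖y_e‖_{L²(T,T+c)}`
grows at least like `e^{fT}`, and periodicity of `g` gives
`‖y_e‖_{L²(T-2,T+c-2)} = ρ a(T)` exactly, with `ρ = e^{-2f} = (q-2)/(q+2)`. By Minkowski the
bounded disturbance moves both window norms by at most `M √c`, so after dividing by `a(T) → ∞`
the estimator tends to `2 (1 + ρ) / (1 - ρ) = q`.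
-/

open MeasureTheory Filter Topology Set

noncomputable section

section IntervalL2Norm

variable {E : Type*} [NormedAddCommGroup E]

def intervalL2Norm (u : ℝ → E) (a b : ℝ) : ℝ := √(∫ t in a..b, ‖u t‖ ^ 2)

lemma intervalL2Norm_eq_norm_toLp {u : ℝ → E} {a b : ℝ} (hab : a ≤ b)
    (hu : MemLp u 2 (volume.restrict (Ioc a b))) :
    intervalL2Norm u a b = ‖hu.toLp u‖ := by
  rw [Lp.norm_toLp, hu.eLpNorm_eq_integral_rpow_norm two_ne_zero ENNReal.ofNat_ne_top,
    ENNReal.toReal_ofReal (by positivity), intervalL2Norm,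
    intervalIntegral.integral_of_le hab, Real.sqrt_eq_rpow]
  norm_num

lemma abs_intervalL2Norm_sub_le {u v : ℝ → E} {a b : ℝ} (hab : a ≤ b)
    (hu : MemLp u 2 (volume.restrict (Ioc a b))) (hv : MemLp v 2 (volume.restrict (Ioc a b))) :
    |intervalL2Norm u a b - intervalL2Norm v a b| ≤ intervalL2Norm (u - v) a b := by
  rw [intervalL2Norm_eq_norm_toLp hab hu, intervalL2Norm_eq_norm_toLp hab hv,
    intervalL2Norm_eq_norm_toLp hab (hu.sub hv), hu.toLp_sub hv]
  exact abs_norm_sub_norm_le _ _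

lemma intervalL2Norm_le_of_norm_le {u : ℝ → E} {M : ℝ} (hM : ∀ t, ‖u t‖ ≤ M) (a b : ℝ) :
    intervalL2Norm u a b ≤ M * √|b - a| := by
  have hM0 : 0 ≤ M := (norm_nonneg _).trans (hM 0)
  calc intervalL2Norm u a b ≤ √(M ^ 2 * |b - a|) := by
        refine Real.sqrt_le_sqrt ((le_abs_self _).trans ?_)
        simpa using intervalIntegral.norm_integral_le_of_norm_le_const
          (f := fun t => ‖u t‖ ^ 2) fun t _ => by
            simpa using pow_le_pow_left₀ (norm_nonneg _) (hM t) 2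
    _ = M * √|b - a| := by rw [Real.sqrt_mul (sq_nonneg M), Real.sqrt_sq hM0]

lemma Continuous.memLp_restrict_Ioc {u : ℝ → E} (hu : Continuous u) (p : ENNReal) (a b : ℝ) :
    MemLp u p (volume.restrict (Ioc a b)) := by
  obtain ⟨C, hC⟩ := (isCompact_Icc (a := a) (b := b)).exists_bound_of_continuousOn hu.continuousOn
  exact .of_bound hu.aestronglyMeasurable C
    (ae_restrict_of_forall_mem measurableSet_Ioc fun t ht => hC t (Ioc_subset_Icc_self ht))

lemma abs_intervalL2Norm_add_sub_le {u w : ℝ → E} {a c M : ℝ} (hc : 0 ≤ c) (hu : Continuous u)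
    (hw : AEStronglyMeasurable w) (hwM : ∀ t, ‖w t‖ ≤ M) :
    |intervalL2Norm (u + w) a (a + c) - intervalL2Norm u a (a + c)| ≤ M * √c := by
  have hac : a ≤ a + c := le_add_of_nonneg_right hc
  have hw2 : MemLp w 2 (volume.restrict (Ioc a (a + c))) :=
    .of_bound hw.restrict M (ae_of_all _ hwM)
  have hu2 := hu.memLp_restrict_Ioc 2 a (a + c)
  calc _ ≤ intervalL2Norm (u + w - u) a (a + c) := abs_intervalL2Norm_sub_le hac (hu2.add hw2) hu2
    _ ≤ M * √|a + c - a| := intervalL2Norm_le_of_norm_le (by simpa using hwM) _ _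
    _ = M * √c := by rw [add_sub_cancel_left, abs_of_nonneg hc]

lemma intervalL2Norm_const_smul [NormedSpace ℝ E] (r : ℝ) (u : ℝ → E) (a b : ℝ) :
    intervalL2Norm (fun t => r • u t) a b = |r| * intervalL2Norm u a b := by
  simp only [intervalL2Norm, norm_smul, mul_pow, Real.norm_eq_abs,
    intervalIntegral.integral_const_mul, Real.sqrt_mul (sq_nonneg _), Real.sqrt_sq_eq_abs, abs_abs]

lemma intervalL2Norm_comp_sub_right (u : ℝ → E) (d a b : ℝ) :
    intervalL2Norm (fun t => u (t - d)) a b = intervalL2Norm u (a - d) (b - d) := by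
  simp only [intervalL2Norm, intervalIntegral.integral_comp_sub_right (fun t => ‖u t‖ ^ 2)]

lemma Function.Periodic.intervalL2Norm_add_eq {u : ℝ → E} {p : ℝ} (hu : Function.Periodic u p)
    (a b : ℝ) : intervalL2Norm u a (a + p) = intervalL2Norm u b (b + p) := by
  unfold intervalL2Norm
  congr 1
  exact (hu.comp fun x => ‖x‖ ^ 2).intervalIntegral_add_eq a b

end IntervalL2Norm

section ExpSmulPeriodic

variable {E : Type*} [NormedAddCommGroup E] [NormedSpace ℝ E] {g : ℝ → E} {f p : ℝ}

lemma intervalL2Norm_exp_smul_sub_period (hg : Function.Periodic g p) (a b : ℝ) :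
    intervalL2Norm (fun t => Real.exp (f * t) • g t) (a - p) (b - p) =
      Real.exp (-(f * p)) * intervalL2Norm (fun t => Real.exp (f * t) • g t) a b := by
  have hshift : (fun t => Real.exp (f * (t - p)) • g (t - p)) =
      fun t => Real.exp (-(f * p)) • Real.exp (f * t) • g t := by
    ext t
    rw [hg.sub_eq, smul_smul, ← Real.exp_add]
    ring_nf
  rw [← intervalL2Norm_comp_sub_right, hshift, intervalL2Norm_const_smul,
    abs_of_pos (Real.exp_pos _)]

lemma exp_mul_intervalL2Norm_le (hf : 0 ≤ f) (hg : Continuous g) (hgp : Function.Periodic g p)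
    {c : ℝ} (hp : 0 ≤ p) (hpc : p ≤ c) (T : ℝ) :
    Real.exp (f * T) * intervalL2Norm g 0 p ≤
      intervalL2Norm (fun t => Real.exp (f * t) • g t) T (T + c) := by
  have hsq_int : ∀ (u : ℝ → E), Continuous u → ∀ a b : ℝ,
      IntervalIntegrable (fun t => ‖u t‖ ^ 2) volume a b := fun u hu a b =>
    (hu.norm.pow 2).intervalIntegrable a b
  calc Real.exp (f * T) * intervalL2Norm g 0 p
      = intervalL2Norm (fun t => Real.exp (f * T) • g t) T (T + p) := by
        rw [intervalL2Norm_const_smul, abs_of_pos (Real.exp_pos _),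
          hgp.intervalL2Norm_add_eq T 0, zero_add]
    _ ≤ intervalL2Norm (fun t => Real.exp (f * t) • g t) T (T + p) := by
        refine Real.sqrt_le_sqrt (intervalIntegral.integral_mono_on (by linarith)
          (hsq_int _ (by fun_prop) _ _) (hsq_int _ (by fun_prop) _ _) fun t ht => ?_)
        simp only [norm_smul, Real.norm_eq_abs, abs_of_pos (Real.exp_pos _)]
        gcongr
        exact ht.1
    _ ≤ intervalL2Norm (fun t => Real.exp (f * t) • g t) T (T + c) :=
        Real.sqrt_le_sqrt (intervalIntegral.integral_mono_interval le_rfl (by linarith)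
          (by linarith) (ae_of_all _ fun t => sq_nonneg _) (hsq_int _ (by fun_prop) _ _))

lemma tendsto_intervalL2Norm_exp_smul_atTop (hf : 0 < f) (hg : Continuous g)
    (hgp : Function.Periodic g p) (hg0 : 0 < intervalL2Norm g 0 p) {c : ℝ} (hp : 0 ≤ p)
    (hpc : p ≤ c) :
    Tendsto (fun T => intervalL2Norm (fun t => Real.exp (f * t) • g t) T (T + c)) atTop atTop :=
  tendsto_atTop_mono (exp_mul_intervalL2Norm_le hf.le hg hgp hp hpc)
    ((Real.tendsto_exp_atTop.comp (tendsto_id.const_mul_atTop hf)).atTop_mul_const hg0)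

end ExpSmulPeriodic

section Ratio

variable {α : Type*} {l : Filter α} {a : α → ℝ}

lemma tendsto_div_of_abs_sub_mul_le {S : α → ℝ} {ρ K : ℝ} (ha : Tendsto a l atTop)
    (hS : ∀ x, |S x - ρ * a x| ≤ K) : Tendsto (fun x => S x / a x) l (𝓝 ρ) := by
  have hrem : Tendsto (fun x => (S x - ρ * a x) / a x) l (𝓝 0) := by
    refine squeeze_zero_norm' ?_ ((tendsto_const_nhds (x := K)).div_atTop ha)
    filter_upwards [ha.eventually_gt_atTop 0] with x hx
    rw [norm_div, Real.norm_eq_abs, Real.norm_eq_abs, abs_of_pos hx]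
    exact div_le_div_of_nonneg_right (hS x) hx.le
  refine (by simpa using hrem.const_add ρ : Tendsto _ l (𝓝 ρ)).congr' ?_
  filter_upwards [ha.eventually_gt_atTop 0] with x hx
  field_simp
  ring

lemma tendsto_add_div_sub_of_abs_sub_le {S₁ S₂ : α → ℝ} {ρ K : ℝ} (ha : Tendsto a l atTop)
    (h₁ : ∀ x, |S₁ x - a x| ≤ K) (h₂ : ∀ x, |S₂ x - ρ * a x| ≤ K) (hρ : ρ ≠ 1) :
    Tendsto (fun x => (S₁ x + S₂ x) / (S₁ x - S₂ x)) l (𝓝 ((1 + ρ) / (1 - ρ))) := by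
  have hu := tendsto_div_of_abs_sub_mul_le (ρ := 1) ha (by simpa using h₁)
  have hv := tendsto_div_of_abs_sub_mul_le ha h₂
  refine ((hu.add hv).div (hu.sub hv) (sub_ne_zero.2 hρ.symm)).congr' ?_
  filter_upwards [ha.eventually_gt_atTop 0] with x hx
  simp only [Pi.div_apply]
  rw [← add_div, ← sub_div, div_div_div_cancel_right₀ hx.ne']

end Ratio

section FourierSeries

variable {T : ℝ} {b : ℤ → ℂ}

lemma continuous_tsum_mul_fourier (hb : Summable (‖b ·‖)) :
    Continuous fun x : AddCircle T => ∑' n, b n * fourier n x :=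
  continuous_tsum (fun n => by fun_prop) hb fun n x => by simp [Circle.norm_coe]

lemma periodic_tsum_mul_fourier_coe :
    Function.Periodic (fun t : ℝ => ∑' n, b n * fourier n (t : AddCircle T)) T := fun t => by
  simp only [AddCircle.coe_add_period]

lemma tsum_mul_exp_eq_exp_smul_tsum_mul_fourier (f t : ℝ) :
    ∑' n : ℤ, b n * Complex.exp ((f + n * Real.pi * Complex.I) * t) =
      Real.exp (f * t) • ∑' n, b n * fourier n (t : AddCircle (2 : ℝ)) := by
  rw [Complex.real_smul, ← tsum_mul_left]
  refine tsum_congr fun n => ?_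
  rw [fourier_coe_apply, Complex.ofReal_exp, mul_left_comm, ← Complex.exp_add]
  congr 2
  push_cast
  ring

variable [Fact (0 < T)]

lemma fourierCoeff_tsum_mul_fourier (hb : Summable (‖b ·‖)) (m : ℤ) :
    fourierCoeff (fun x : AddCircle T => ∑' n, b n * fourier n x) m = b m := by
  set F : ℤ → AddCircle T → ℂ := fun n x => fourier (-m) x • (b n * fourier n x)
  have hF : ∀ n, Integrable (F n) AddCircle.haarAddCircle := fun n =>
    Continuous.integrable_of_hasCompactSupport (by fun_prop) (.of_compactSpace _)
  have hF_norm : ∀ n, ∫ x, ‖F n x‖ ∂AddCircle.haarAddCircle = ‖b n‖ := fun n => by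
    simp [F, Circle.norm_coe]
  calc fourierCoeff (fun x : AddCircle T => ∑' n, b n * fourier n x) m
      = ∑' n, fourierCoeff (fun x => b n * fourier n x) m := by
        have := (hasSum_integral_of_summable_integral_norm hF
          (by simpa only [hF_norm] using hb)).tsum_eq
        simp only [F, smul_eq_mul, tsum_mul_left] at this
        exact this.symm
    _ = ∑' n, b n * (Pi.single n 1 : ℤ → ℂ) m := by
        simp only [fourierCoeff.const_mul, fourierCoeff_fourier]
    _ = b m := by
        rw [tsum_eq_single m fun n hn => by simp [hn.symm]]
        simp

lemma integral_norm_sq_tsum_mul_fourier_pos (hb : Summable (‖b ·‖)) (hb0 : b ≠ 0) :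
    0 < ∫ t in 0..T, ‖∑' n, b n * fourier n (t : AddCircle T)‖ ^ 2 := by
  have hT : (0 : ℝ) < T := Fact.out
  set G : AddCircle T → ℂ := fun x => ∑' n, b n * fourier n x
  have hG : Continuous G := continuous_tsum_mul_fourier hb
  refine (intervalIntegral.integral_nonneg hT.le fun t _ => sq_nonneg _).lt_of_ne fun h0 => ?_
  have hG0 : ∀ᵐ t : ℝ ∂volume.restrict (Ioc 0 T), G t = 0 := by
    rw [intervalIntegral.integral_of_le hT.le] at h0
    filter_upwards [(integral_eq_zero_iff_of_nonneg (fun t => sq_nonneg _)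
      ((hG.comp (AddCircle.continuous_mk' T)).norm.pow 2).integrableOn_Ioc).1 h0.symm] with t ht
    simpa using ht
  obtain ⟨m, hm⟩ := Function.ne_iff.1 hb0
  refine hm ?_
  rw [← fourierCoeff_tsum_mul_fourier (T := T) hb m, fourierCoeff_eq_intervalIntegral G m 0,
    zero_add, intervalIntegral.integral_of_le hT.le, integral_congr_ae (g := 0) ?_]
  · simp
  · filter_upwards [hG0] with t ht
    simp [ht]

end FourierSeries

theorem strings_disturbed_identification_general (q : ℝ) (hq : 2 < q)
    (lam : ℤ → ℂ)
    (hlam : ∀ n : ℤ,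
      lam n = ((Real.log ((q + 2) / (q - 2)) : ℂ)) / 2 + (n : ℂ) * (Real.pi : ℂ) * Complex.I)
    (b : ℤ → ℂ) (hb : Summable fun n => ‖b n‖) (hb0 : b ≠ 0)
    (M : ℝ)
    (d : ℝ → ℂ) (hdmeas : Measurable d) (hdM : ∀ t : ℝ, ‖d t‖ ≤ M)
    (y : ℝ → ℂ)
    (hy : ∀ t : ℝ, y t = (∑' n : ℤ, b n * Complex.exp (lam n * (t : ℂ))) + d t)
    (c : ℝ) (hc : 2 < c) :
    Filter.Tendsto
      (fun T : ℝ =>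
        2 * (Real.sqrt (∫ t in T..(T + c), ‖y t‖ ^ 2) +
              Real.sqrt (∫ t in (T - 2)..(T + c - 2), ‖y t‖ ^ 2)) /
          (Real.sqrt (∫ t in T..(T + c), ‖y t‖ ^ 2) -
              Real.sqrt (∫ t in (T - 2)..(T + c - 2), ‖y t‖ ^ 2)))
      Filter.atTop (nhds q) := by
  have : Fact ((0 : ℝ) < 2) := ⟨two_pos⟩
  set f := Real.log ((q + 2) / (q - 2)) / 2 with hf_def
  set g : ℝ → ℂ := fun t => ∑' n, b n * fourier n (t : AddCircle (2 : ℝ))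
  set ye : ℝ → ℂ := fun t => Real.exp (f * t) • g t
  have hf : 0 < f := div_pos (Real.log_pos ((one_lt_div (by linarith)).2 (by linarith))) two_pos
  have hρ : Real.exp (-(f * 2)) = (q - 2) / (q + 2) := by
    rw [hf_def, div_mul_cancel₀ _ two_ne_zero, Real.exp_neg, Real.exp_log (by positivity),
      inv_div]
  have hg : Continuous g := (continuous_tsum_mul_fourier hb).comp (AddCircle.continuous_mk' 2)
  have hy' : y = ye + d := funext fun t => by
    simp only [hy, Pi.add_apply, ye, g, ← tsum_mul_exp_eq_exp_smul_tsum_mul_fourier, hlam, hf_def,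
      Complex.ofReal_div, Complex.ofReal_ofNat]
  have hwin : ∀ a, |intervalL2Norm y a (a + c) - intervalL2Norm ye a (a + c)| ≤ M * √c :=
    fun a => hy' ▸ abs_intervalL2Norm_add_sub_le (by linarith) (by fun_prop)
      hdmeas.aestronglyMeasurable hdM
  have hshift : ∀ T, |intervalL2Norm y (T - 2) (T + c - 2) -
      Real.exp (-(f * 2)) * intervalL2Norm ye T (T + c)| ≤ M * √c := fun T => by
    rw [← intervalL2Norm_exp_smul_sub_period periodic_tsum_mul_fourier_coe,
      ← sub_add_eq_add_sub]
    exact hwin (T - 2)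
  have key := tendsto_add_div_sub_of_abs_sub_le
    (tendsto_intervalL2Norm_exp_smul_atTop hf hg periodic_tsum_mul_fourier_coe
      (Real.sqrt_pos.2 (integral_norm_sq_tsum_mul_fourier_pos hb hb0)) zero_le_two hc.le)
    hwin hshift (by rw [hρ]; exact ((div_lt_one (by linarith)).2 (by linarith)).ne)
  rw [hρ] at key
  convert key.const_mul 2 using 2
  · exact mul_div_assoc _ _ _
  · field_simp
    ring

/-- Corollary 5.1 of the paper (coefficient part) for two connected strings with joint
anti-damping: the estimator computed from two shifted windows of the disturbed output
converges to the true anti-damping coefficient `q > 2` as `T → +∞`. -/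
theorem strings_disturbed_identification (q : ℝ) (hq : 2 < q)
    (lam : ℤ → ℂ)
    (hlam : ∀ n : ℤ,
      lam n = ((Real.log ((q + 2) / (q - 2)) : ℂ)) / 2 + (n : ℂ) * (Real.pi : ℂ) * Complex.I)
    (b : ℤ → ℂ) (hb : Summable fun n => ‖b n‖) (hb0 : b ≠ 0)
    (M : ℝ) (hM : 0 ≤ M)
    (d : ℝ → ℂ) (hdmeas : Measurable d) (hdM : ∀ t : ℝ, ‖d t‖ ≤ M)
    (y : ℝ → ℂ)
    (hy : ∀ t : ℝ, y t = (∑' n : ℤ, b n * Complex.exp (lam n * (t : ℂ))) + d t)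
    (c : ℝ) (hc : 2 < c) :
    Filter.Tendsto
      (fun T : ℝ =>
        2 * (Real.sqrt (∫ t in T..(T + c), ‖y t‖ ^ 2) +
              Real.sqrt (∫ t in (T - 2)..(T + c - 2), ‖y t‖ ^ 2)) /
          (Real.sqrt (∫ t in T..(T + c), ‖y t‖ ^ 2) -
              Real.sqrt (∫ t in (T - 2)..(T + c - 2), ‖y t‖ ^ 2)))
      Filter.atTop (nhds q) :=
  strings_disturbed_identification_general q hq lam hlam b hb hb0 M d hdmeas hdM y hy c hc
end
end
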